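/- arXiv:0806.0507 — 10 statements merged into one kernel-verified Lean document; each statement's English description precedes it below -/
import Mathlib

section
/- Let $X = (\mathbb{R}^n, \|\cdot\|)$ be a real Banach space with an absolute norm, and let $\tilde{X} = (\mathbb{C}^n, \|\cdot\|_\mathbb{C})$ be its complexification with norm $\|(z_1,\dots,z_n)\|_\mathbb{C} = \|(|z_1|,\dots,|z_n|)\|$. Then a point $x \in \mathbb{R}^n$ is an extreme point of the unit ball of $X$ if and only if $x$ (viewed in $\mathbb{C}^n$) is an extreme point of the unit ball of $\tilde{X}$. -/
/-!
An absolute seminorm `p` on `ℝⁿ` is monotone in `|v|`: moving one coordinate `c` to `d ≥ |c|`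
cannot decrease `p`, since `t ↦ p (update w j t)` is convex and even.

If `x` is extreme in the real ball and `y + z = 2x` in the complex ball, then `Re y + Re z = 2x`
with `Re y`, `Re z` in the real ball, so `Re y = x`. Next `u = |y|` lies in the real ball and
dominates `|x|`; writing `x = s |x|` with signs `s`, the vectors `s u` and `s (2|x| - u)` lie in
the real ball and average to `x`, so `u = |x| = |Re y|`, forcing `Im y = 0`. The converse is the
isometric embedding `ℝⁿ ⊆ ℂⁿ`.
-/

open Function

/-- Midpoint extremality of `x` in `{q ≤ 1}`; membership of `x` itself is not required. -/
def IsUnitBallExtreme (𝕜 : Type*) {E : Type*} [Semiring 𝕜] [AddCommMonoid E] [Module 𝕜 E]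
    (q : E → ℝ) (x : E) : Prop :=
  ∀ y z, q y ≤ 1 → q z ≤ 1 → y + z = (2 : 𝕜) • x → y = x ∧ z = x

theorem exists_abs_eq_one_mul_abs_eq {ι : Type*} (x : ι → ℝ) :
    ∃ s : ι → ℝ, |s| = 1 ∧ s * |x| = x := by
  refine ⟨fun j => if x j < 0 then -1 else 1, ?_, ?_⟩ <;> ext j
  · by_cases h : x j < 0 <;> simp [h]
  · by_cases h : x j < 0
    · simp [h, abs_of_neg h]
    · simp [h, abs_of_nonneg (not_lt.1 h)]

namespace Seminorm

variable {ι : Type*} (p : Seminorm ℝ (ι → ℝ))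

theorem map_update_le_of_abs_le [DecidableEq ι] (hp : ∀ v, p |v| = p v) (w : ι → ℝ) (j : ι)
    {c d : ℝ} (h : |c| ≤ d) : p (update w j c) ≤ p (update w j d) := by
  have hconv : ConvexOn ℝ Set.univ fun t => p (update w j t) := by
    refine ⟨convex_univ, fun a _ b _ μ ν hμ hν hμν => ?_⟩
    calc p (update w j (μ • a + ν • b))
        = p (μ • update w j a + ν • update w j b) := by
          rw [← update_smul, ← update_smul, ← update_add, ← add_smul, hμν, one_smul]
      _ ≤ μ • p (update w j a) + ν • p (update w j b) := p.convexOn.2 trivial trivial hμ hν hμν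
  have hsymm : p (update w j (-d)) = p (update w j d) := by
    rw [← hp, ← hp (update w j d)]
    congr 1
    ext k
    rcases eq_or_ne k j with rfl | hk
    · simp
    · simp [hk]
  calc p (update w j c) ≤ max (p (update w j (-d))) (p (update w j d)) :=
        hconv.le_on_segment trivial trivial <| by
          rw [segment_eq_Icc (by linarith [abs_nonneg c])]; exact abs_le.1 h
    _ = p (update w j d) := by rw [hsymm, max_self]

theorem map_le_map_of_abs_le [Fintype ι] (hp : ∀ v, p |v| = p v) {a c : ι → ℝ} (h : |a| ≤ c) :
    p a ≤ p c := by
  classical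
  suffices ∀ s : Finset ι, p (s.piecewise a c) ≤ p c by simpa using this Finset.univ
  intro s
  induction s using Finset.induction_on with
  | empty => simp
  | insert j s hj ih =>
    calc p ((insert j s).piecewise a c)
        ≤ p (update (s.piecewise a c) j (c j)) := by
          rw [Finset.piecewise_insert]; exact p.map_update_le_of_abs_le hp _ j (h j)
      _ = p (s.piecewise a c) := by
          rw [update_eq_self_iff.2 (s.piecewise_eq_of_notMem a c hj).symm]
      _ ≤ p c := ih

theorem map_mul_of_abs_eq_one (hp : ∀ v, p |v| = p v) {s : ι → ℝ} (hs : |s| = 1) (v : ι → ℝ) :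
    p (s * v) = p v := by
  rw [← hp, ← hp v]
  congr 1
  ext j
  have hsj : |s j| = 1 := congrFun hs j
  simp [abs_mul, hsj]

theorem eq_abs_of_isUnitBallExtreme [Fintype ι] (hp : ∀ v, p |v| = p v) {x u : ι → ℝ}
    (hx : IsUnitBallExtreme ℝ p x) (hu : p u ≤ 1) (hxu : |x| ≤ u) : u = |x| := by
  obtain ⟨s, hs, hsx⟩ := exists_abs_eq_one_mul_abs_eq x
  have hreflect : |(2 : ℝ) • |x| - u| ≤ u := fun j => by
    have hxuj : |x j| ≤ u j := hxu j
    simp only [Pi.abs_apply, Pi.sub_apply, Pi.smul_apply, smul_eq_mul]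
    rw [abs_le]; constructor <;> linarith [abs_nonneg (x j)]
  have hsu : s * u = x := (hx (s * u) (s * ((2 : ℝ) • |x| - u))
    (by rwa [p.map_mul_of_abs_eq_one hp hs])
    (by rw [p.map_mul_of_abs_eq_one hp hs]; exact (p.map_le_map_of_abs_le hp hreflect).trans hu)
    (by rw [← mul_add, add_sub_cancel, mul_smul_comm, hsx])).1
  ext j
  have hsj : s j ≠ 0 := by
    have : |s j| = 1 := congrFun hs j
    exact abs_ne_zero.1 (by simp [this])
  exact mul_left_cancel₀ hsj ((congrFun hsu j).trans (congrFun hsx j).symm)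

theorem isUnitBallExtreme_ofReal [Fintype ι] (hp : ∀ v, p |v| = p v) {x : ι → ℝ}
    (hx : IsUnitBallExtreme ℝ p x) :
    IsUnitBallExtreme ℂ (fun z : ι → ℂ => p (‖z ·‖)) (fun j => (x j : ℂ)) := by
  intro y z hy hz hyz
  have hre : (fun j => (y j).re) = x := by
    refine (hx _ (fun j => (z j).re) ?_ ?_ ?_).1
    · exact (p.map_le_map_of_abs_le hp fun j => Complex.abs_re_le_norm (y j)).trans hy
    · exact (p.map_le_map_of_abs_le hp fun j => Complex.abs_re_le_norm (z j)).trans hz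
    · ext j; simpa using congrArg Complex.re (congrFun hyz j)
  have hnorm : (‖y ·‖) = |x| := p.eq_abs_of_isUnitBallExtreme hp hx hy fun j => by
    rw [← hre]; exact Complex.abs_re_le_norm (y j)
  have hy' : y = fun j => (x j : ℂ) := by
    funext j
    apply Complex.ext
    · exact congrFun hre j
    · refine Complex.abs_re_eq_norm.1 ?_
      rw [congrFun hre j]; exact (congrFun hnorm j).symm
  refine ⟨hy', ?_⟩
  ext j
  have := congrFun hyz j
  simp only [hy', Pi.add_apply, Pi.smul_apply, smul_eq_mul] at this
  linear_combination this

theorem isUnitBallExtreme_of_ofReal (hp : ∀ v, p |v| = p v) {x : ι → ℝ}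
    (hx : IsUnitBallExtreme ℂ (fun z : ι → ℂ => p (‖z ·‖)) (fun j => (x j : ℂ))) :
    IsUnitBallExtreme ℝ p x := by
  intro y z hy hz hyz
  have hnorm (v : ι → ℝ) : p (fun j => ‖(v j : ℂ)‖) = p v := by
    simp only [Complex.norm_real, Real.norm_eq_abs]
    exact hp v
  obtain ⟨hy', hz'⟩ := hx (fun j => y j) (fun j => z j) ((hnorm y).trans_le hy)
    ((hnorm z).trans_le hz) (by ext j; simpa using congrArg Complex.ofReal (congrFun hyz j))
  exact ⟨funext fun j => Complex.ofReal_injective (congrFun hy' j),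
    funext fun j => Complex.ofReal_injective (congrFun hz' j)⟩

theorem isUnitBallExtreme_ofReal_iff [Fintype ι] (hp : ∀ v, p |v| = p v) (x : ι → ℝ) :
    IsUnitBallExtreme ℂ (fun z : ι → ℂ => p (‖z ·‖)) (fun j => (x j : ℂ)) ↔
      IsUnitBallExtreme ℝ p x :=
  ⟨p.isUnitBallExtreme_of_ofReal hp, p.isUnitBallExtreme_ofReal hp⟩

end Seminorm

theorem stmt_3_general (n : ℕ) (N : (Fin n → ℝ) → ℝ)
    (hadd : ∀ x y : Fin n → ℝ, N (x + y) ≤ N x + N y)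
    (hsmul : ∀ (c : ℝ) (x : Fin n → ℝ), N (c • x) = |c| * N x)
    (habs : ∀ x : Fin n → ℝ, N x = N (fun j => |x j|))
    (Nc : (Fin n → ℂ) → ℝ) (hNc : ∀ z : Fin n → ℂ, Nc z = N (fun j => ‖z j‖))
    (x : Fin n → ℝ) :
    ((∀ y z : Fin n → ℝ, N y ≤ 1 → N z ≤ 1 → y + z = (2 : ℝ) • x → y = x ∧ z = x) ↔
     (∀ y z : Fin n → ℂ, Nc y ≤ 1 → Nc z ≤ 1 →
        y + z = (2 : ℂ) • (fun j => ((x j : ℝ) : ℂ)) →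
        (y = fun j => ((x j : ℝ) : ℂ)) ∧ (z = fun j => ((x j : ℝ) : ℂ)))) := by
  let p : Seminorm ℝ (Fin n → ℝ) := Seminorm.of N hadd hsmul
  simp only [hNc]
  exact (p.isUnitBallExtreme_ofReal_iff (fun v => (habs v).symm) x).symm

/-- for a real absolute norm `N` on `ℝⁿ` and its complexification
`N_ℂ (z) = N (|z_1|, …, |z_n|)` on `ℂⁿ`, a real point `x` is an extreme point of
the unit ball of `(ℝⁿ, N)` iff it is an extreme point of the unit ball of
`(ℂⁿ, N_ℂ)`. -/
theorem stmt_3 (n : ℕ) (N : (Fin n → ℝ) → ℝ)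
    (hadd : ∀ x y : Fin n → ℝ, N (x + y) ≤ N x + N y)
    (hsmul : ∀ (c : ℝ) (x : Fin n → ℝ), N (c • x) = |c| * N x)
    (habs : ∀ x : Fin n → ℝ, N x = N (fun j => |x j|))
    (hunit : ∀ j : Fin n, N (Pi.single j 1) = 1)
    (Nc : (Fin n → ℂ) → ℝ) (hNc : ∀ z : Fin n → ℂ, Nc z = N (fun j => ‖z j‖))
    (x : Fin n → ℝ) (hx : N x ≤ 1) :
    ((∀ y z : Fin n → ℝ, N y ≤ 1 → N z ≤ 1 → y + z = (2 : ℝ) • x → y = x ∧ z = x) ↔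
     (∀ y z : Fin n → ℂ, Nc y ≤ 1 → Nc z ≤ 1 →
        y + z = (2 : ℂ) • (fun j => ((x j : ℝ) : ℂ)) →
        (y = fun j => ((x j : ℝ) : ℂ)) ∧ (z = fun j => ((x j : ℝ) : ℂ)))) :=
  stmt_3_general n N hadd hsmul habs Nc hNc x
end

section
/- Let $Y = \ell_1^N$ over $\mathbb{C}$, let $m \ge 1$, and let $j_1,\dots,j_m \in \{1,\dots,N\}$ be distinct indices. Define the $m$-homogeneous polynomial $Q(x) = \prod_{k=1}^m x_{j_k} + \left(\sum_{k=1}^m x_{j_k}\right)^m$. Then $Q$ attains its norm on the closed unit ball of $Y$ only at the points $\frac{c}{m}\sum_{k=1}^m e_{j_k}$ with $|c| = 1$. -/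
/-!
With `z = x0 ∘ j` and `s = ∑ ‖z k‖ ≤ 1`, the triangle inequality and AM–GM give
`‖Q x0‖ ≤ (s / m) ^ m + s ^ m ≤ m⁻¹ ^ m + 1`, and the point `m⁻¹ • ∑ e_{j k}` attains `m⁻¹ ^ m + 1`.
At a maximiser every inequality is therefore an equality: `s = 1` makes `x0` vanish off the
indices `j k`, equality in AM–GM gives `‖z k‖ = 1 / m`, and equality in the triangle inequality
makes every `z k` a nonnegative multiple of their sum `c`, which has `‖c‖ = 1`.
-/

open Finset

namespace Real

variable {ι : Type*} [Fintype ι] [Nonempty ι]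

theorem prod_eq_prod_rpow_inv_card_pow {a : ι → ℝ} (ha : ∀ i, 0 ≤ a i) :
    ∏ i, a i = (∏ i, a i ^ ((Fintype.card ι : ℝ)⁻¹)) ^ Fintype.card ι := by
  rw [← prod_pow]
  exact prod_congr rfl fun i _ => (rpow_inv_natCast_pow (ha i) Fintype.card_ne_zero).symm

theorem sum_inv_card_eq_one : ∑ _i : ι, (Fintype.card ι : ℝ)⁻¹ = 1 := by
  simp [Fintype.card_ne_zero]

theorem prod_le_sum_div_card_pow {a : ι → ℝ} (ha : ∀ i, 0 ≤ a i) :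
    ∏ i, a i ≤ ((∑ i, a i) / Fintype.card ι) ^ Fintype.card ι := by
  rw [prod_eq_prod_rpow_inv_card_pow ha, ← inv_mul_eq_div, mul_sum]
  exact pow_le_pow_left₀ (prod_nonneg fun i _ => rpow_nonneg (ha i) _)
    (geom_mean_le_arith_mean_weighted univ _ a (fun _ _ => by positivity) sum_inv_card_eq_one
      fun i _ => ha i) _

theorem eq_sum_div_card_of_prod_eq {a : ι → ℝ} (ha : ∀ i, 0 ≤ a i)
    (h : ∏ i, a i = ((∑ i, a i) / Fintype.card ι) ^ Fintype.card ι) (i : ι) :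
    a i = (∑ i, a i) / Fintype.card ι := by
  rw [prod_eq_prod_rpow_inv_card_pow ha, ← inv_mul_eq_div, mul_sum,
    pow_left_inj₀ (prod_nonneg fun i _ => rpow_nonneg (ha i) _)
      (sum_nonneg fun i _ => mul_nonneg (by positivity) (ha i)) Fintype.card_ne_zero] at h
  rw [← inv_mul_eq_div, mul_sum]
  exact (geom_mean_eq_arith_mean_weighted_iff_of_pos' univ _ a (fun _ _ => by positivity)
    sum_inv_card_eq_one fun i _ => ha i).1 h i (mem_univ i)

end Real

theorem smul_eq_smul_of_norm_sum_eq_sum_norm {ι F : Type*} [NormedAddCommGroup F]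
    [InnerProductSpace ℝ F] {s : Finset ι} {v : ι → F}
    (h : ‖∑ i ∈ s, v i‖ = ∑ i ∈ s, ‖v i‖) {i : ι} (hi : i ∈ s) :
    ‖v i‖ • ∑ i ∈ s, v i = ‖∑ i ∈ s, v i‖ • v i := by
  set T := ∑ i ∈ s, v i
  have hle : ∀ i ∈ s, inner ℝ T (v i) ≤ ‖T‖ * ‖v i‖ := fun i _ => real_inner_le_norm _ _
  have hsum : ∑ i ∈ s, inner ℝ T (v i) = ∑ i ∈ s, ‖T‖ * ‖v i‖ := by
    rw [← inner_sum, ← mul_sum, ← h, real_inner_self_eq_norm_mul_norm]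
  exact inner_eq_norm_mul_iff_real.1 ((sum_eq_sum_iff_of_le hle).1 hsum i hi)

namespace Function.Injective

variable {ι κ : Type*} [Fintype ι] [Fintype κ] {j : κ → ι} {f : ι → ℝ}

theorem sum_comp_le_sum (hj : Injective j) (hf : ∀ i, 0 ≤ f i) : ∑ k, f (j k) ≤ ∑ i, f i :=
  calc ∑ k, f (j k) = ∑ i ∈ univ.map ⟨j, hj⟩, f i := by rw [sum_map]; rfl
    _ ≤ ∑ i, f i := sum_le_univ_sum_of_nonneg hf

theorem eq_zero_of_sum_comp_eq_sum (hj : Injective j) (hf : ∀ i, 0 ≤ f i)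
    (h : ∑ k, f (j k) = ∑ i, f i) {i : ι} (hi : i ∉ Set.range j) : f i = 0 := by
  classical
  have hi' : i ∉ univ.map ⟨j, hj⟩ := by simpa using hi
  have := sum_le_univ_sum_of_nonneg (s := insert i (univ.map ⟨j, hj⟩)) hf
  rw [sum_insert hi', sum_map, Embedding.coeFn_mk, h] at this
  exact le_antisymm (by linarith) (hf i)

end Function.Injective

theorem Complex.eq_sum_div_of_norm_prod_add_sum_pow_ge {m : ℕ} [NeZero m] {z : Fin m → ℂ}
    (hz : ∑ k, ‖z k‖ ≤ 1) (h : ((m : ℝ)⁻¹) ^ m + 1 ≤ ‖∏ k, z k + (∑ k, z k) ^ m‖) :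
    ‖∑ k, z k‖ = 1 ∧ ∑ k, ‖z k‖ = 1 ∧ ∀ k, z k = (∑ k, z k) / m := by
  set s := ∑ k, ‖z k‖
  set T := ∑ k, z k
  have hT : ‖T‖ ≤ s := norm_sum_le _ _
  have hm : 1 ≤ m := NeZero.one_le
  have hprod : ∏ k, ‖z k‖ ≤ (s / m) ^ m := by
    simpa using Real.prod_le_sum_div_card_pow fun k => norm_nonneg (z k)
  have hQ : ((m : ℝ)⁻¹) ^ m + 1 ≤ ∏ k, ‖z k‖ + ‖T‖ ^ m := by
    refine h.trans ((norm_add_le _ _).trans_eq ?_)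
    rw [norm_prod, norm_pow]
  have hs1 : s = 1 := by
    by_contra hs
    have hslt : s < 1 := lt_of_le_of_ne hz hs
    have : (s / m) ^ m ≤ ((m : ℝ)⁻¹) ^ m := by
      rw [div_eq_mul_inv]
      gcongr
      exact mul_le_of_le_one_left (by positivity) hz
    have : ‖T‖ ^ m < 1 := pow_lt_one₀ (norm_nonneg _) (hT.trans_lt hslt) (by omega)
    linarith
  have hT1 : ‖T‖ = 1 := by
    by_contra hT1
    have : ‖T‖ ^ m < 1 := pow_lt_one₀ (norm_nonneg _) (lt_of_le_of_ne (hs1 ▸ hT) hT1) (by omega)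
    rw [hs1, one_div] at hprod
    linarith
  have hprod_eq : ∏ k, ‖z k‖ = (s / m) ^ m := by
    rw [hT1, one_pow] at hQ
    rw [hs1, one_div] at hprod ⊢
    linarith
  refine ⟨hT1, hs1, fun k => ?_⟩
  have hnorm : ‖z k‖ = s / m := by
    simpa using
      Real.eq_sum_div_card_of_prod_eq (fun k => norm_nonneg (z k)) (by simpa using hprod_eq) k
  have hsmul := smul_eq_smul_of_norm_sum_eq_sum_norm (hT1.trans hs1.symm) (mem_univ k)
  rw [hnorm, hs1, hT1, one_smul, Complex.real_smul] at hsmul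
  rw [← hsmul]
  push_cast
  ring

/-- on complex `ℓ₁^N`, the `m`-homogeneous polynomial
`Q(x) = ∏ x_{j_k} + (∑ x_{j_k})^m` (distinct indices `j_1,…,j_m`) attains its
norm on the closed unit ball only at the points `(c/m) ∑ e_{j_k}` with `|c| = 1`. -/
theorem stmt_4 (N m : ℕ) (hm : 1 ≤ m) (j : Fin m → Fin N)
    (hj : Function.Injective j)
    (Q : (Fin N → ℂ) → ℂ)
    (hQ : ∀ x : Fin N → ℂ, Q x = (∏ k, x (j k)) + (∑ k, x (j k)) ^ m)
    (x0 : Fin N → ℂ) (hx0 : ∑ i, ‖x0 i‖ ≤ 1)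
    (hatt : ∀ x : Fin N → ℂ, (∑ i, ‖x i‖ ≤ 1) → ‖Q x‖ ≤ ‖Q x0‖) :
    ∃ c : ℂ, ‖c‖ = 1 ∧ x0 = (c / (m : ℂ)) • ∑ k, (Pi.single (j k) (1 : ℂ) : Fin N → ℂ) := by
  have : NeZero m := ⟨by omega⟩
  set E : Fin N → ℂ := ∑ k, Pi.single (j k) 1
  have hE : ∀ k, E (j k) = 1 := fun k => by simp [E, Pi.single_apply, hj.eq_iff]
  have hE_of_notMem : ∀ i ∉ Set.range j, E i = 0 := fun i hi => by
    simp only [E, Finset.sum_apply]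
    exact sum_eq_zero fun k _ => Pi.single_eq_of_ne (fun h => hi ⟨k, h.symm⟩) 1
  have htest : ((m : ℝ)⁻¹) ^ m + 1 ≤ ‖Q x0‖ := by
    have hnorm : ∑ i, ‖((m : ℂ)⁻¹ • E) i‖ = 1 := by
      rw [← Fintype.sum_of_injective j hj (fun _ => ‖(m : ℂ)⁻¹‖) _
        (fun i hi => by simp [hE_of_notMem i hi]) (fun k => by simp [hE k])]
      simp
    have hval : Q ((m : ℂ)⁻¹ • E) = (((m : ℝ)⁻¹ ^ m + 1 : ℝ) : ℂ) := by
      simp [hQ, hE]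
    have := hatt _ hnorm.le
    rwa [hval, Complex.norm_real, Real.norm_of_nonneg (by positivity)] at this
  obtain ⟨hT1, hs1, hz⟩ := Complex.eq_sum_div_of_norm_prod_add_sum_pow_ge
    ((hj.sum_comp_le_sum fun i => norm_nonneg (x0 i)).trans hx0) (hQ x0 ▸ htest)
  have hout : ∀ i ∉ Set.range j, x0 i = 0 := fun i hi =>
    norm_eq_zero.1 <| hj.eq_zero_of_sum_comp_eq_sum (fun i => norm_nonneg (x0 i))
      (le_antisymm (hj.sum_comp_le_sum fun i => norm_nonneg (x0 i)) (hs1 ▸ hx0)) hi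
  refine ⟨∑ k, x0 (j k), hT1, funext fun i => ?_⟩
  by_cases hi : i ∈ Set.range j
  · obtain ⟨k, rfl⟩ := hi
    simpa [hE] using hz k
  · simp [hE_of_notMem i hi, hout i hi]
end

section
/- Let $K$ be a complete metric space, $X$ a Banach space, and $A$ a closed subspace of $C_b(K : X)$. If the set of strong peak functions in $A$ is dense in $A$, then the set of strong peak points $\rho A$ is a norming subset of $A$, i.e., $\|f\| = \sup\{\|f(t)\| : t \in \rho A\}$ for every $f \in A$. -/
open Filter

/-- `f` is a strong peak function at `t`. -/
def StrongPeakAt {K X : Type*} [MetricSpace K] [NormedAddCommGroup X]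
    (f : BoundedContinuousFunction K X) (t : K) : Prop :=
  f ≠ 0 ∧ ∀ u : ℕ → K,
    Tendsto (fun n => ‖f (u n)‖) atTop (nhds ‖f‖) → Tendsto u atTop (nhds t)

/-! A strong peak function attains its norm at its peak point, since a maximising sequence must
converge to that point. So if `g` peaks at `t` and `‖f - g‖ < ε`, then `‖f t‖ > ‖f‖ - 2ε`. -/

open Topology

namespace BoundedContinuousFunction

variable {K X : Type*} [TopologicalSpace K] [SeminormedAddCommGroup X]

theorem exists_seq_tendsto_norm [Nonempty K] (g : K →ᵇ X) :
    ∃ u : ℕ → K, Tendsto (fun n => ‖g (u n)‖) atTop (𝓝 ‖g‖) := by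
  obtain ⟨r, -, hr, hr_mem⟩ := exists_seq_tendsto_sSup (Set.range_nonempty fun x => ‖g x‖)
    ⟨‖g‖, Set.forall_mem_range.2 g.norm_coe_le_norm⟩
  choose u hu using hr_mem
  refine ⟨u, ?_⟩
  rw [norm_eq_iSup_norm, iSup]
  simpa only [hu] using hr

theorem norm_le_norm_apply_add_two_mul {f g : K →ᵇ X} {t : K} (hg : ‖g t‖ = ‖g‖) :
    ‖f‖ ≤ ‖f t‖ + 2 * ‖f - g‖ := by
  have hft : ‖g t - f t‖ ≤ ‖f - g‖ := by
    rw [norm_sub_rev]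
    exact (f - g).norm_coe_le_norm t
  calc ‖f‖ ≤ ‖g‖ + ‖f - g‖ := norm_le_insert' f g
    _ = ‖g t‖ + ‖f - g‖ := by rw [hg]
    _ ≤ ‖f t‖ + 2 * ‖f - g‖ := by linarith [norm_le_insert' (g t) (f t)]

theorem norm_eq_sSup_of_forall_exists_lt (f : K →ᵇ X) (P : K → Prop)
    (h : ∀ ε > (0 : ℝ), ∃ t, P t ∧ ‖f‖ - ε < ‖f t‖) :
    ‖f‖ = sSup {r : ℝ | ∃ t, P t ∧ r = ‖f t‖} := by
  have h_exists_gt : ∀ w < ‖f‖, ∃ r ∈ {r : ℝ | ∃ t, P t ∧ r = ‖f t‖}, w < r := by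
    intro w hw
    obtain ⟨t, ht, hlt⟩ := h (‖f‖ - w) (sub_pos.2 hw)
    exact ⟨‖f t‖, ⟨t, ht, rfl⟩, by linarith⟩
  obtain ⟨r, hr, -⟩ := h_exists_gt (‖f‖ - 1) (by linarith)
  refine (csSup_eq_of_forall_le_of_forall_lt_exists_gt ⟨r, hr⟩ ?_ h_exists_gt).symm
  rintro _ ⟨t, -, rfl⟩
  exact f.norm_coe_le_norm t

end BoundedContinuousFunction

theorem StrongPeakAt.norm_apply_eq_norm {K X : Type*} [MetricSpace K] [NormedAddCommGroup X]
    {g : BoundedContinuousFunction K X} {t : K} (h : StrongPeakAt g t) : ‖g t‖ = ‖g‖ := by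
  have : Nonempty K := ⟨t⟩
  obtain ⟨u, hu⟩ := g.exists_seq_tendsto_norm
  have hut : Tendsto u atTop (𝓝 t) := h.2 u hu
  exact tendsto_nhds_unique ((g.continuous.norm.tendsto t).comp hut) hu

theorem stmt_5_general {K X : Type*} [MetricSpace K]
    [NormedAddCommGroup X] [NormedSpace ℝ X]
    (A : Submodule ℝ (BoundedContinuousFunction K X))
    (hdense : ∀ f ∈ A, ∀ ε > (0 : ℝ), ∃ g ∈ A, (∃ t : K, StrongPeakAt g t) ∧ ‖f - g‖ < ε) :
    ∀ f ∈ A, ‖f‖ = sSup {r : ℝ | ∃ t : K,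
      (∃ g ∈ A, StrongPeakAt g t ∧ ‖g t‖ = ‖g‖) ∧ r = ‖f t‖} := by
  intro f hf
  refine f.norm_eq_sSup_of_forall_exists_lt _ fun ε hε => ?_
  obtain ⟨g, hgA, ⟨t, hpeak⟩, hfg⟩ := hdense f hf (ε / 2) (half_pos hε)
  have hgt : ‖g t‖ = ‖g‖ := hpeak.norm_apply_eq_norm
  refine ⟨t, ⟨g, hgA, hpeak, hgt⟩, ?_⟩
  linarith [BoundedContinuousFunction.norm_le_norm_apply_add_two_mul (f := f) hgt]

/-- if the strong peak functions are dense in a closed subspace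
`A` of `C_b(K : X)`, then the set `ρA` of strong peak points is norming for `A`. -/
theorem stmt_5 {K X : Type*} [MetricSpace K] [CompleteSpace K]
    [NormedAddCommGroup X] [NormedSpace ℝ X] [CompleteSpace X]
    (A : Submodule ℝ (BoundedContinuousFunction K X))
    (hA : IsClosed (A : Set (BoundedContinuousFunction K X)))
    (hdense : ∀ f ∈ A, ∀ ε > (0 : ℝ), ∃ g ∈ A, (∃ t : K, StrongPeakAt g t) ∧ ‖f - g‖ < ε) :
    ∀ f ∈ A, ‖f‖ = sSup {r : ℝ | ∃ t : K,
      (∃ g ∈ A, StrongPeakAt g t ∧ ‖g t‖ = ‖g‖) ∧ r = ‖f t‖} :=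
  stmt_5_general A hdense
end

section
/- Let $X$ be a locally uniformly convex complex Banach space. Then every point of the unit sphere $S_X$ is a strong peak point for $\mathcal{A}_u(B_X)$: for each $x \in S_X$ there exists $f \in \mathcal{A}_u(B_X)$ with $\|f\| = |f(x)|$ such that every sequence $\{x_n\} \subseteq B_X$ with $|f(x_n)| \to \|f\|$ converges to $x$. -/
open Filter Metric Topology

/-!
Take a norming functional `g` for `x` (`‖g‖ = 1`, `g x = 1`) and the affine peak function
`f = (1 + g) / 2`. Then `2 ‖f y‖ = ‖g (y + x)‖ ≤ ‖y + x‖ ≤ 2` on the ball, so `‖f (u n)‖ → 1`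
forces `‖u n + x‖ → 2`, and local uniform convexity gives `u n → x`.
-/

section PeakFunction

variable {𝕜 X : Type*} [RCLike 𝕜] [NormedAddCommGroup X] [NormedSpace 𝕜 X]
  {g : X →L[𝕜] 𝕜} {x : X}

lemma norm_one_add_apply_div_two_le (hg : ‖g‖ ≤ 1) (hgx : g x = 1) (y : X) :
    ‖(1 + g y) / 2‖ ≤ ‖y + x‖ / 2 := by
  have hgyx : ‖1 + g y‖ ≤ ‖y + x‖ :=
    calc ‖1 + g y‖ = ‖g (y + x)‖ := by rw [map_add, hgx, add_comm]
      _ ≤ ‖g‖ * ‖y + x‖ := g.le_opNorm _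
      _ ≤ ‖y + x‖ := mul_le_of_le_one_left (norm_nonneg _) hg
  rw [norm_div, RCLike.norm_two]
  gcongr

lemma norm_one_add_apply_div_two_le_one (hg : ‖g‖ ≤ 1) (hgx : g x = 1) (hx : ‖x‖ ≤ 1)
    {y : X} (hy : ‖y‖ ≤ 1) : ‖(1 + g y) / 2‖ ≤ 1 := by
  have := norm_add_le y x
  linarith [norm_one_add_apply_div_two_le hg hgx y]

lemma tendsto_norm_add_of_tendsto_norm_one_add_apply_div_two (hg : ‖g‖ ≤ 1) (hgx : g x = 1)
    (hx : ‖x‖ ≤ 1) {u : ℕ → X} (hu : ∀ n, ‖u n‖ ≤ 1)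
    (h : Tendsto (fun n => ‖(1 + g (u n)) / 2‖) atTop (𝓝 1)) :
    Tendsto (fun n => ‖u n + x‖) atTop (𝓝 2) := by
  have hlow : Tendsto (fun n => 2 * ‖(1 + g (u n)) / 2‖) atTop (𝓝 2) := by
    simpa using h.const_mul 2
  refine tendsto_of_tendsto_of_tendsto_of_le_of_le hlow tendsto_const_nhds (fun n => ?_) fun n => ?_
  · linarith [norm_one_add_apply_div_two_le hg hgx (u n)]
  · linarith [norm_add_le (u n) x, hu n]

end PeakFunction

lemma ContinuousLinearMap.exists_norm_eq_one_apply_eq_one {X : Type*} [NormedAddCommGroup X]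
    [NormedSpace ℂ X] {x : X} (hx : ‖x‖ = 1) : ∃ g : X →L[ℂ] ℂ, ‖g‖ = 1 ∧ g x = 1 := by
  obtain ⟨g, hg, hgx⟩ := exists_dual_vector ℂ x (by rw [hx]; exact one_ne_zero)
  exact ⟨g, hg, by rw [hgx, hx, RCLike.ofReal_one]⟩

theorem stmt_7_general {X : Type*} [NormedAddCommGroup X] [NormedSpace ℂ X]
    (hluc : ∀ x : X, ‖x‖ = 1 → ∀ u : ℕ → X, (∀ n, ‖u n‖ ≤ 1) →
      Tendsto (fun n => ‖u n + x‖) atTop (nhds 2) → Tendsto u atTop (nhds x)) :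
    ∀ x : X, ‖x‖ = 1 → ∃ f : X → ℂ,
      DifferentiableOn ℂ f (ball (0 : X) 1) ∧
      UniformContinuousOn f (closedBall (0 : X) 1) ∧
      (∃ M : ℝ, ∀ y ∈ closedBall (0 : X) 1, ‖f y‖ ≤ M) ∧
      0 < ‖f x‖ ∧
      IsLUB {r : ℝ | ∃ y : X, ‖y‖ ≤ 1 ∧ r = ‖f y‖} ‖f x‖ ∧
      (∀ u : ℕ → X, (∀ n, ‖u n‖ ≤ 1) →
        Tendsto (fun n => ‖f (u n)‖) atTop (nhds ‖f x‖) → Tendsto u atTop (nhds x)) := by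
  intro x hx
  obtain ⟨g, hg, hgx⟩ := ContinuousLinearMap.exists_norm_eq_one_apply_eq_one hx
  have hfx : ‖(1 + g x) / 2‖ = 1 := by rw [hgx]; norm_num
  refine ⟨fun y => (1 + g y) / 2, by fun_prop,
    ((uniformContinuous_const.add g.uniformContinuous).div_const' 2).uniformContinuousOn,
    ⟨1, fun y hy =>
      norm_one_add_apply_div_two_le_one hg.le hgx hx.le (mem_closedBall_zero_iff.mp hy)⟩,
    by rw [hfx]; exact one_pos, ?_, fun u hu h => ?_⟩
  · refine IsGreatest.isLUB ⟨⟨x, hx.le, rfl⟩, ?_⟩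
    rintro r ⟨y, hy, rfl⟩
    rw [hfx]
    exact norm_one_add_apply_div_two_le_one hg.le hgx hx.le hy
  · rw [hfx] at h
    exact hluc x hx u hu
      (tendsto_norm_add_of_tendsto_norm_one_add_apply_div_two hg.le hgx hx.le hu h)

/-- in a locally uniformly convex complex Banach space, every point
of the unit sphere is a strong peak point for `𝒜_u(B_X)` (bounded functions on
the closed unit ball, holomorphic on the open ball and uniformly continuous on
the closed ball). -/
theorem stmt_7 {X : Type*} [NormedAddCommGroup X] [NormedSpace ℂ X] [CompleteSpace X]
    (hluc : ∀ x : X, ‖x‖ = 1 → ∀ u : ℕ → X, (∀ n, ‖u n‖ ≤ 1) →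
      Tendsto (fun n => ‖u n + x‖) atTop (nhds 2) → Tendsto u atTop (nhds x)) :
    ∀ x : X, ‖x‖ = 1 → ∃ f : X → ℂ,
      DifferentiableOn ℂ f (ball (0 : X) 1) ∧
      UniformContinuousOn f (closedBall (0 : X) 1) ∧
      (∃ M : ℝ, ∀ y ∈ closedBall (0 : X) 1, ‖f y‖ ≤ M) ∧
      0 < ‖f x‖ ∧
      IsLUB {r : ℝ | ∃ y : X, ‖y‖ ≤ 1 ∧ r = ‖f y‖} ‖f x‖ ∧
      (∀ u : ℕ → X, (∀ n, ‖u n‖ ≤ 1) →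
        Tendsto (fun n => ‖f (u n)‖) atTop (nhds ‖f x‖) → Tendsto u atTop (nhds x)) :=
  stmt_7_general hluc
end

section
/- Let $X$ be a complex Banach space and suppose $\{x_\alpha\} \subseteq S_X$ is a set of uniformly strongly exposed points with exposing functionals $\{x_\alpha^*\}$ and modulus $\delta(\epsilon)$. If $\{z_n\}$ is a sequence in $B_X$ such that $\lim_n \inf_{p > n} |z_n^*(z_p)| = 1$, where $z_n^*$ is the exposing functional of $z_n \in \{x_\alpha\}$, then $\{z_n\}$ has a convergent subsequence. -/
/-!
Once `|z_n^*(z_p)|` exceeds `1 - δ(ε)`, rotating `z_p` by a unimodular scalar makes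
`Re z_n^*` of it exceed `1 - δ(ε)`, so strong exposedness puts `z_p` within `ε` of the circle
`{θ z_n : |θ| = 1}`. Hence for every `ε` all but finitely many terms lie `ε`-close to a compact
set, the range of `(z_n)` is totally bounded, and completeness yields a convergent subsequence.
-/

open Filter Metric Set Topology

theorem TotallyBounded.exists_tendsto_subseq {α : Type*} [PseudoMetricSpace α] [CompleteSpace α]
    {u : ℕ → α} (h : TotallyBounded (range u)) :
    ∃ σ : ℕ → ℕ, StrictMono σ ∧ ∃ a : α, Tendsto (u ∘ σ) atTop (𝓝 a) := by
  obtain ⟨a, -, σ, hσ, hu⟩ := (h.closure.isCompact_of_isClosed isClosed_closure).tendsto_subseq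
    fun n => subset_closure (mem_range_self n)
  exact ⟨σ, hσ, a, hu⟩

theorem totallyBounded_of_forall_subset_thickening {α : Type*} [PseudoMetricSpace α] {s : Set α}
    (h : ∀ ε > 0, ∃ t : Set α, TotallyBounded t ∧ s ⊆ thickening ε t) : TotallyBounded s := by
  refine totallyBounded_iff.mpr fun ε hε => ?_
  obtain ⟨t, ht, hst⟩ := h (ε / 2) (half_pos hε)
  obtain ⟨c, hc, htc⟩ := totallyBounded_iff.mp ht (ε / 2) (half_pos hε)
  refine ⟨c, hc, fun x hx => ?_⟩
  obtain ⟨y, hy, hxy⟩ := mem_thickening_iff.mp (hst hx)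
  obtain ⟨w, hw, hyw⟩ := mem_iUnion₂.mp (htc hy)
  refine mem_iUnion₂.mpr ⟨w, hw, ?_⟩
  calc dist x w ≤ dist x y + dist y w := dist_triangle x y w
    _ < ε / 2 + ε / 2 := add_lt_add hxy hyw
    _ = ε := add_halves ε

theorem totallyBounded_range_of_forall_near_circle {𝕜 E : Type*} [RCLike 𝕜]
    [NormedAddCommGroup E] [NormedSpace 𝕜 E] {u : ℕ → E}
    (h : ∀ ε > 0, ∃ N, ∀ p > N, ∃ θ : 𝕜, ‖θ‖ = 1 ∧ ‖u p - θ • u N‖ < ε) :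
    TotallyBounded (range u) := by
  refine totallyBounded_of_forall_subset_thickening fun ε hε => ?_
  obtain ⟨N, hN⟩ := h ε hε
  refine ⟨(· • u N) '' sphere (0 : 𝕜) 1 ∪ u '' Iic N,
    ((isCompact_sphere 0 1).image (by fun_prop)).totallyBounded.union
      ((finite_Iic N).image u).totallyBounded, ?_⟩
  rintro _ ⟨p, rfl⟩
  rcases le_or_gt p N with hp | hp
  · exact self_subset_thickening hε _ (Or.inr (mem_image_of_mem u hp))
  · obtain ⟨θ, hθ, hclose⟩ := hN p hp
    refine mem_thickening_iff.mpr ⟨θ • u N, Or.inl ⟨θ, by simpa using hθ, rfl⟩, ?_⟩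
    rwa [dist_eq_norm]

theorem exists_norm_eq_one_norm_sub_smul_le {𝕜 E : Type*} [RCLike 𝕜]
    [NormedAddCommGroup E] [NormedSpace 𝕜 E] {f : E →L[𝕜] 𝕜} {x : E} {η ε : ℝ}
    (hexp : ∀ y : E, ‖y‖ ≤ 1 → η ≤ RCLike.re (f y) → ‖y - x‖ ≤ ε)
    {y : E} (hy : ‖y‖ ≤ 1) (hfy : η ≤ ‖f y‖) :
    ∃ θ : 𝕜, ‖θ‖ = 1 ∧ ‖y - θ • x‖ ≤ ε := by
  obtain ⟨c, hc, hcy⟩ := RCLike.exists_norm_eq_mul_self (f y)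
  have hc0 : c ≠ 0 := norm_ne_zero_iff.mp (hc ▸ one_ne_zero)
  have hre : RCLike.re (f (c • y)) = ‖f y‖ := by
    rw [map_smul, smul_eq_mul, ← hcy, RCLike.ofReal_re]
  have hrot : ‖c • y - x‖ ≤ ε := hexp (c • y) (by rwa [norm_smul, hc, one_mul]) (hre ▸ hfy)
  refine ⟨c⁻¹, by rw [norm_inv, hc, inv_one], ?_⟩
  calc ‖y - c⁻¹ • x‖ = ‖c⁻¹ • (c • y - x)‖ := by rw [smul_sub, inv_smul_smul₀ hc0]
    _ = ‖c • y - x‖ := by rw [norm_smul, norm_inv, hc, inv_one, one_mul]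
    _ ≤ ε := hrot

theorem eventually_forall_lt_of_tendsto_sInf {a : ℕ → ℕ → ℝ} (ha : ∀ n p, 0 ≤ a n p) {L η : ℝ}
    (h : Tendsto (fun n => sInf {r : ℝ | ∃ p : ℕ, n < p ∧ r = a n p}) atTop (𝓝 L))
    (hη : η < L) : ∀ᶠ n in atTop, ∀ p, n < p → η < a n p := by
  filter_upwards [h.eventually (eventually_gt_nhds hη)] with n hn p hp
  exact hn.trans_le (csInf_le ⟨0, by rintro _ ⟨q, -, rfl⟩; exact ha n q⟩ ⟨p, hp, rfl⟩)

theorem stmt_8_general {X : Type*} [NormedAddCommGroup X] [NormedSpace ℂ X] [CompleteSpace X]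
    (S : Set X) (hS : ∀ x ∈ S, ‖x‖ = 1)
    (φ : X → (X →L[ℂ] ℂ))
    (δ : ℝ → ℝ) (hδ : ∀ ε : ℝ, 0 < ε → 0 < δ ε)
    (hexp : ∀ ε : ℝ, 0 < ε → ∀ x ∈ S, ∀ y : X, ‖y‖ ≤ 1 →
      1 - δ ε ≤ (φ x y).re → ‖y - x‖ ≤ ε)
    (z : ℕ → X) (hz : ∀ n, z n ∈ S)
    (hcond : Tendsto (fun n => sInf {r : ℝ | ∃ p : ℕ, n < p ∧ r = ‖φ (z n) (z p)‖})
      atTop (nhds 1)) :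
    ∃ σ : ℕ → ℕ, StrictMono σ ∧ ∃ z₀ : X, Tendsto (z ∘ σ) atTop (nhds z₀) := by
  refine TotallyBounded.exists_tendsto_subseq <|
    totallyBounded_range_of_forall_near_circle (𝕜 := ℂ) fun ε hε => ?_
  have hε' : 0 < ε / 2 := half_pos hε
  obtain ⟨N, hN⟩ := (eventually_forall_lt_of_tendsto_sInf (fun _ _ => norm_nonneg _) hcond
    (sub_lt_self 1 (hδ _ hε'))).exists
  refine ⟨N, fun p hp => ?_⟩
  obtain ⟨θ, hθ, hclose⟩ := exists_norm_eq_one_norm_sub_smul_le (hexp _ hε' (z N) (hz N))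
    (hS _ (hz p)).le (hN p hp).le
  exact ⟨θ, hθ, hclose.trans_lt (half_lt_self hε)⟩

/-- for a uniformly strongly exposed family `S` in a complex Banach
space, a sequence `{z_n} ⊆ S` with `lim_n inf_{p>n} |z_n^*(z_p)| = 1` has a
convergent subsequence. -/
theorem stmt_8 {X : Type*} [NormedAddCommGroup X] [NormedSpace ℂ X] [CompleteSpace X]
    (S : Set X) (hS : ∀ x ∈ S, ‖x‖ = 1)
    (φ : X → (X →L[ℂ] ℂ))
    (hφ : ∀ x ∈ S, ‖φ x‖ = 1 ∧ φ x x = 1)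
    (δ : ℝ → ℝ) (hδ : ∀ ε : ℝ, 0 < ε → 0 < δ ε)
    (hexp : ∀ ε : ℝ, 0 < ε → ∀ x ∈ S, ∀ y : X, ‖y‖ ≤ 1 →
      1 - δ ε ≤ (φ x y).re → ‖y - x‖ ≤ ε)
    (z : ℕ → X) (hz : ∀ n, z n ∈ S)
    (hcond : Tendsto (fun n => sInf {r : ℝ | ∃ p : ℕ, n < p ∧ r = ‖φ (z n) (z p)‖})
      atTop (nhds 1)) :
    ∃ σ : ℕ → ℕ, StrictMono σ ∧ ∃ z₀ : X, Tendsto (z ∘ σ) atTop (nhds z₀) :=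
  stmt_8_general S hS φ δ hδ hexp z hz hcond
end

section
/- Let $X$ be a finite dimensional real CL-space with an absolute norm, let $G = G(X)$ be its associated graph on vertex set $\{1,\dots,n\}$ with edges $\{(i,j) : \|e_i + e_j\| > 1\}$, and let $\tau$ be a maximal clique of $G$. Then the subspace $\mathrm{span}\{e_j : j \in \tau\}$ of $X$ is isometrically isomorphic to $\ell_1^{|\tau|}$, i.e., $\|\sum_{j\in\tau} a_j e_j\| = \sum_{j\in\tau}|a_j|$ for all scalars $a_j$. -/
/-!
For an absolute norm both the unit ball `B` and the dual ball `B*` are invariant under flipping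
the sign of a coordinate, and so are their sets of extreme points. If `|f ⬝ᵥ v| = 1` for all
extreme `f ∈ B*` and `v ∈ B`, flipping coordinates of `f` shows that `f` and `v` interact through
at most one coordinate. An edge `{i, j}` of the graph yields, by Hahn–Banach and Krein–Milman,
an extreme functional positive at both `i` and `j`; hence an extreme point `v` of `B` has at most
one nonzero coordinate in a clique `τ`, and `∑ j ∈ τ, |v j| ≤ ‖v‖ ≤ 1`. Krein–Milman extends this
convex bound from the extreme points to all of `B`, so `∑ j ∈ τ, |a j| ≤ ‖a‖`; the reverse
inequality is the triangle inequality.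
-/

open Finset Set

variable {ι : Type*}

def signFlip [DecidableEq ι] (k : ι) : (ι → ℝ) ≃ₗ[ℝ] (ι → ℝ) where
  toFun x := Function.update x k (-x k)
  invFun x := Function.update x k (-x k)
  map_add' x y := by
    ext m; rcases eq_or_ne m k with rfl | h <;> simp [*, add_comm]
  map_smul' c x := by
    ext m; rcases eq_or_ne m k with rfl | h <;> simp [*]
  left_inv x := by
    ext m; rcases eq_or_ne m k with rfl | h <;> simp [*]
  right_inv x := by
    ext m; rcases eq_or_ne m k with rfl | h <;> simp [*]

@[simp]
lemma signFlip_apply [DecidableEq ι] (k : ι) (x : ι → ℝ) (m : ι) :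
    signFlip k x m = if m = k then -x m else x m := by
  simp only [signFlip, LinearEquiv.coe_mk, LinearMap.coe_mk, AddHom.coe_mk,
    Function.update_apply]
  split_ifs with h <;> simp [h]

lemma signFlip_signFlip [DecidableEq ι] (k : ι) (x : ι → ℝ) :
    signFlip k (signFlip k x) = x := by
  ext m; simp only [signFlip_apply]; split_ifs <;> simp [*]

lemma abs_signFlip_apply [DecidableEq ι] (k : ι) (x : ι → ℝ) (m : ι) :
    |signFlip k x m| = |x m| := by
  rw [signFlip_apply]; split_ifs <;> simp

lemma signFlip_dotProduct [Fintype ι] [DecidableEq ι] (k : ι) (f x : ι → ℝ) :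
    signFlip k f ⬝ᵥ x = f ⬝ᵥ signFlip k x :=
  Finset.sum_congr rfl fun m _ => by simp only [signFlip_apply]; split_ifs <;> ring

lemma signFlip_dotProduct_eq_sub [Fintype ι] [DecidableEq ι] (k : ι) (f v : ι → ℝ) :
    signFlip k f ⬝ᵥ v = f ⬝ᵥ v - 2 * (f k * v k) := by
  have hterm : ∀ m, signFlip k f m * v m =
      f m * v m - if m = k then 2 * (f m * v m) else 0 := by
    intro m; simp only [signFlip_apply]; split_ifs <;> ring
  simp only [dotProduct, hterm, Finset.sum_sub_distrib, Finset.sum_ite_eq', Finset.mem_univ,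
    if_true]

lemma signFlip_mem_extremePoints [DecidableEq ι] {S : Set (ι → ℝ)} {k : ι}
    (hS : ∀ x ∈ S, signFlip k x ∈ S) {x : ι → ℝ} (hx : x ∈ S.extremePoints ℝ) :
    signFlip k x ∈ S.extremePoints ℝ := by
  have himage : signFlip k '' S = S :=
    (image_subset_iff.2 hS).antisymm fun y hy => ⟨_, hS y hy, signFlip_signFlip k y⟩
  have := image_extremePoints (𝕜 := ℝ) (signFlip k) S
  rw [himage] at this
  exact this ▸ mem_image_of_mem _ hx

/- Flipping the sign of `f k` changes `f ⬝ᵥ v` by `-2 f k v k`, so a nonzero term `f k * v k`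
must equal `f ⬝ᵥ v`; two such terms are impossible, since flipping both turns `f ⬝ᵥ v` into
`-3 (f ⬝ᵥ v)`. -/
lemma mul_eq_zero_of_forall_abs_dotProduct_eq_one [Fintype ι] [DecidableEq ι]
    {F : Set (ι → ℝ)} (hF : ∀ k, ∀ f ∈ F, signFlip k f ∈ F) {v : ι → ℝ}
    (hv : ∀ f ∈ F, |f ⬝ᵥ v| = 1) {f : ι → ℝ} (hf : f ∈ F) {i j : ι} (hij : i ≠ j)
    (hi : f i * v i ≠ 0) : f j * v j = 0 := by
  set s := f ⬝ᵥ v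
  have hs : |s| = 1 := hv f hf
  have hterm : ∀ k, f k * v k ≠ 0 → f k * v k = s := by
    intro k hk
    have hflip := hv _ (hF k f hf)
    rw [signFlip_dotProduct_eq_sub] at hflip
    rcases abs_eq (zero_le_one' ℝ) |>.1 hs with h | h <;>
      rcases abs_eq (zero_le_one' ℝ) |>.1 hflip with h' | h'
    all_goals first | linarith | exact absurd (by linarith) hk
  by_contra hj
  have hflip := hv _ (hF i _ (hF j f hf))
  rw [signFlip_dotProduct_eq_sub, signFlip_dotProduct_eq_sub, signFlip_apply, if_neg hij,
    hterm i hi, hterm j hj, show s - 2 * s - 2 * s = -3 * s by ring, abs_mul, hs] at hflip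
  norm_num at hflip

lemma Pi.single_eq_smul_single_one {R : Type*} [Semiring R] [DecidableEq ι] (k : ι) (c : R) :
    Pi.single k c = c • Pi.single k (1 : R) := by
  simpa using Pi.single_smul' k c (1 : R)

theorem ConvexOn.le_of_forall_mem_extremePoints_le {E : Type*} [AddCommGroup E] [Module ℝ E]
    [TopologicalSpace E] [T2Space E] [IsTopologicalAddGroup E] [ContinuousSMul ℝ E]
    [LocallyConvexSpace ℝ E] {S : Set E} {g : E → ℝ} {c : ℝ} (hS : IsCompact S)
    (hg : ConvexOn ℝ S g) (hgc : ContinuousOn g S) (hext : ∀ x ∈ S.extremePoints ℝ, g x ≤ c)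
    {x : E} (hx : x ∈ S) : g x ≤ c := by
  have hclosed : IsClosed {y ∈ S | g y ≤ c} :=
    hgc.preimage_isClosed_of_isClosed hS.isClosed isClosed_Iic
  rw [← closure_convexHull_extremePoints hS hg.1] at hx
  have hhull : convexHull ℝ (S.extremePoints ℝ) ⊆ {y ∈ S | g y ≤ c} :=
    convexHull_min (fun y hy => ⟨extremePoints_subset hy, hext y hy⟩) (hg.convex_le c)
  exact (closure_minimal hhull hclosed hx).2

namespace Seminorm

structure IsAbsolute [DecidableEq ι] (p : Seminorm ℝ (ι → ℝ)) : Prop where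
  map_abs : ∀ x, p (fun j => |x j|) = p x
  map_single_one : ∀ j, p (Pi.single j 1) = 1

/- The unit ball of the dual norm, a functional being represented by its coefficient vector. -/
def dualUnitBall [Fintype ι] (p : Seminorm ℝ (ι → ℝ)) : Set (ι → ℝ) :=
  {f | ∀ x, p x ≤ 1 → |f ⬝ᵥ x| ≤ 1}

def IsCL [Fintype ι] (p : Seminorm ℝ (ι → ℝ)) : Prop :=
  ∀ f ∈ p.dualUnitBall.extremePoints ℝ, ∀ x ∈ {x | p x ≤ 1}.extremePoints ℝ, |f ⬝ᵥ x| = 1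

def coordinateGraph [DecidableEq ι] (p : Seminorm ℝ (ι → ℝ)) : SimpleGraph ι where
  Adj i j := i ≠ j ∧ 1 < p (Pi.single i 1 + Pi.single j 1)
  symm := ⟨fun _ _ h => ⟨h.1.symm, by rw [add_comm]; exact h.2⟩⟩
  loopless := ⟨fun _ h => h.1 rfl⟩

lemma convex_unitBall {E : Type*} [AddCommGroup E] [Module ℝ E] (p : Seminorm ℝ E) :
    Convex ℝ {x | p x ≤ 1} := by
  simpa only [closedBall_zero_eq] using p.convex_closedBall 0 1

lemma continuous_of_finiteDimensional {E : Type*} [NormedAddCommGroup E] [NormedSpace ℝ E]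
    [FiniteDimensional ℝ E] (p : Seminorm ℝ E) : Continuous p :=
  continuousOn_univ.1 (p.convexOn.continuousOn isOpen_univ)

lemma isClosed_unitBall {E : Type*} [NormedAddCommGroup E] [NormedSpace ℝ E]
    [FiniteDimensional ℝ E] (p : Seminorm ℝ E) : IsClosed {x | p x ≤ 1} :=
  isClosed_le p.continuous_of_finiteDimensional continuous_const

lemma convex_dualUnitBall [Fintype ι] (p : Seminorm ℝ (ι → ℝ)) : Convex ℝ p.dualUnitBall := by
  intro f hf g hg a b ha hb hab x hx
  rw [add_dotProduct, smul_dotProduct, smul_dotProduct, smul_eq_mul, smul_eq_mul]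
  calc |a * (f ⬝ᵥ x) + b * (g ⬝ᵥ x)| ≤ a * |f ⬝ᵥ x| + b * |g ⬝ᵥ x| := by
        simpa [abs_mul, abs_of_nonneg ha, abs_of_nonneg hb] using
          abs_add_le (a * (f ⬝ᵥ x)) (b * (g ⬝ᵥ x))
    _ ≤ a * 1 + b * 1 := by gcongr; exacts [hf x hx, hg x hx]
    _ = 1 := by rw [mul_one, mul_one, hab]

lemma isClosed_dualUnitBall [Fintype ι] (p : Seminorm ℝ (ι → ℝ)) :
    IsClosed p.dualUnitBall := by
  simp only [dualUnitBall, Set.ofPred_forall]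
  exact isClosed_iInter fun x => isClosed_iInter fun _ =>
    isClosed_le (by fun_prop) continuous_const

/- Separate `x` from the closed convex unit ball by Hahn–Banach. -/
lemma exists_mem_dualUnitBall_one_lt_dotProduct [Fintype ι] [DecidableEq ι]
    {p : Seminorm ℝ (ι → ℝ)} {x : ι → ℝ} (hx : 1 < p x) :
    ∃ f ∈ p.dualUnitBall, 1 < f ⬝ᵥ x := by
  obtain ⟨ℓ, u, hlt, hux⟩ := geometric_hahn_banach_closed_point
    p.convex_unitBall p.isClosed_unitBall hx.not_ge
  have hu : 0 < u := by simpa using hlt 0 (by simp)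
  have hℓ : ∀ y, ℓ y = (fun k => ℓ (Pi.single k 1)) ⬝ᵥ y := by
    intro y
    conv_lhs => rw [← Finset.univ_sum_single y]
    simp only [dotProduct, map_sum]
    refine Finset.sum_congr rfl fun k _ => ?_
    rw [Pi.single_eq_smul_single_one, map_smul, smul_eq_mul, mul_comm]
  refine ⟨u⁻¹ • fun k => ℓ (Pi.single k 1), fun y hy => ?_, ?_⟩
  · rw [smul_dotProduct, ← hℓ, smul_eq_mul, abs_mul, abs_inv, abs_of_pos hu,
      inv_mul_le_iff₀ hu, mul_one, abs_le]
    have hneg := hlt (-y) (by simpa using hy)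
    rw [map_neg] at hneg
    exact ⟨by linarith, (hlt y hy).le⟩
  · rw [smul_dotProduct, ← hℓ, smul_eq_mul, lt_inv_mul_iff₀ hu, mul_one]
    exact hux

namespace IsAbsolute

variable [DecidableEq ι] {p : Seminorm ℝ (ι → ℝ)}

lemma map_single (hp : p.IsAbsolute) (j : ι) (c : ℝ) : p (Pi.single j c) = |c| := by
  rw [Pi.single_eq_smul_single_one, map_smul_eq_mul, hp.map_single_one, Real.norm_eq_abs, mul_one]

lemma map_signFlip (hp : p.IsAbsolute) (k : ι) (x : ι → ℝ) : p (signFlip k x) = p x := by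
  rw [← hp.map_abs, ← hp.map_abs x]
  simp only [abs_signFlip_apply]

lemma abs_apply_le (hp : p.IsAbsolute) (x : ι → ℝ) (j : ι) : |x j| ≤ p x := by
  have hdiff : x - signFlip j x = Pi.single j (2 * x j) := by
    ext m; rcases eq_or_ne m j with rfl | h <;> simp [*]; ring
  have := map_sub_le_add p x (signFlip j x)
  rw [hdiff, hp.map_single, hp.map_signFlip, abs_mul, abs_two] at this
  linarith

variable [Fintype ι]

lemma le_sum_abs (hp : p.IsAbsolute) (x : ι → ℝ) : p x ≤ ∑ j, |x j| :=
  calc p x = p (∑ j, Pi.single j (x j)) := by rw [Finset.univ_sum_single]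
    _ ≤ ∑ j, p (Pi.single j (x j)) :=
      Finset.le_sum_of_subadditive p (map_zero p).le (map_add_le_add p) _ _
    _ = ∑ j, |x j| := by simp only [hp.map_single]

lemma isCompact_unitBall (hp : p.IsAbsolute) : IsCompact {x | p x ≤ 1} := by
  refine Metric.isCompact_of_isClosed_isBounded p.isClosed_unitBall
    ((Metric.isBounded_closedBall (x := 0) (r := 1)).subset fun x hx => ?_)
  rw [Metric.mem_closedBall, dist_zero_right, pi_norm_le_iff_of_nonneg zero_le_one]
  exact fun j => (Real.norm_eq_abs _).trans_le ((hp.abs_apply_le x j).trans hx)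

lemma abs_apply_le_one_of_mem_dualUnitBall (hp : p.IsAbsolute) {f : ι → ℝ}
    (hf : f ∈ p.dualUnitBall) (k : ι) : |f k| ≤ 1 := by
  simpa using hf (Pi.single k 1) (hp.map_single_one k).le

lemma isCompact_dualUnitBall (hp : p.IsAbsolute) : IsCompact p.dualUnitBall := by
  refine Metric.isCompact_of_isClosed_isBounded p.isClosed_dualUnitBall
    ((Metric.isBounded_closedBall (x := 0) (r := 1)).subset fun f hf => ?_)
  rw [Metric.mem_closedBall, dist_zero_right, pi_norm_le_iff_of_nonneg zero_le_one]
  exact fun k => (Real.norm_eq_abs _).trans_le (hp.abs_apply_le_one_of_mem_dualUnitBall hf k)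

lemma signFlip_mem_dualUnitBall (hp : p.IsAbsolute) (k : ι) {f : ι → ℝ}
    (hf : f ∈ p.dualUnitBall) : signFlip k f ∈ p.dualUnitBall := fun x hx => by
  rw [signFlip_dotProduct]
  exact hf _ (by rwa [hp.map_signFlip])

lemma sSup_le_one_iff (hp : p.IsAbsolute) (f : ι → ℝ) :
    sSup {r | ∃ x, p x ≤ 1 ∧ r = |f ⬝ᵥ x|} ≤ 1 ↔ f ∈ p.dualUnitBall := by
  have hbdd : BddAbove {r | ∃ x, p x ≤ 1 ∧ r = |f ⬝ᵥ x|} := by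
    refine ⟨∑ j, |f j|, ?_⟩
    rintro r ⟨x, hx, rfl⟩
    calc |f ⬝ᵥ x| ≤ ∑ j, |f j * x j| := Finset.abs_sum_le_sum_abs _ _
      _ ≤ ∑ j, |f j| := Finset.sum_le_sum fun j _ => by
        rw [abs_mul]
        exact mul_le_of_le_one_right (abs_nonneg _) ((hp.abs_apply_le x j).trans hx)
  rw [csSup_le_iff hbdd ⟨_, 0, by simp, rfl⟩]
  exact ⟨fun h x hx => h _ ⟨x, hx, rfl⟩, by rintro h r ⟨x, hx, rfl⟩; exact h x hx⟩

/- Krein–Milman: the linear function `· ⬝ᵥ x` exceeds `1` somewhere on the compact convex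
dual ball, hence at one of its extreme points. -/
lemma exists_mem_extremePoints_dualUnitBall (hp : p.IsAbsolute) {x : ι → ℝ} (hx : 1 < p x) :
    ∃ e ∈ p.dualUnitBall.extremePoints ℝ, 1 < e ⬝ᵥ x := by
  obtain ⟨f, hf, hfx⟩ := exists_mem_dualUnitBall_one_lt_dotProduct hx
  by_contra! h
  have hlin : ConvexOn ℝ p.dualUnitBall (· ⬝ᵥ x) :=
    ⟨p.convex_dualUnitBall, fun _ _ _ _ _ _ _ _ _ => by simp [add_dotProduct]⟩
  exact (hlin.le_of_forall_mem_extremePoints_le hp.isCompact_dualUnitBall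
    (by fun_prop) h hf).not_gt hfx

end IsAbsolute

namespace IsCL

variable [Fintype ι] [DecidableEq ι] {p : Seminorm ℝ (ι → ℝ)}

lemma apply_eq_zero_of_adj (hCL : p.IsCL) (hp : p.IsAbsolute) {v : ι → ℝ}
    (hv : v ∈ {x | p x ≤ 1}.extremePoints ℝ) {i j : ι} (hij : p.coordinateGraph.Adj i j)
    (hi : v i ≠ 0) : v j = 0 := by
  obtain ⟨e, he, hlt⟩ := hp.exists_mem_extremePoints_dualUnitBall hij.2
  rw [dotProduct_add, dotProduct_single, dotProduct_single, mul_one, mul_one] at hlt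
  have hbound := hp.abs_apply_le_one_of_mem_dualUnitBall (extremePoints_subset he)
  have hei : 0 < e i := by linarith [(abs_le.1 (hbound j)).2]
  have hej : 0 < e j := by linarith [(abs_le.1 (hbound i)).2]
  have hF : ∀ k, ∀ f ∈ p.dualUnitBall.extremePoints ℝ, signFlip k f ∈ p.dualUnitBall.extremePoints ℝ :=
    fun k _ hf => signFlip_mem_extremePoints (fun _ => hp.signFlip_mem_dualUnitBall k) hf
  have := mul_eq_zero_of_forall_abs_dotProduct_eq_one hF (fun f hf => hCL f hf v hv) he hij.1
    (mul_ne_zero hei.ne' hi)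
  exact (mul_eq_zero.1 this).resolve_left hej.ne'

lemma sum_abs_le_one_of_mem_extremePoints (hCL : p.IsCL) (hp : p.IsAbsolute) {τ : Finset ι}
    (hτ : p.coordinateGraph.IsClique (τ : Set ι)) {v : ι → ℝ}
    (hv : v ∈ {x | p x ≤ 1}.extremePoints ℝ) : ∑ j ∈ τ, |v j| ≤ 1 := by
  by_cases h : ∀ i ∈ τ, v i = 0
  · rw [Finset.sum_eq_zero fun j hj => by rw [h j hj, abs_zero]]
    exact zero_le_one
  obtain ⟨i, hi, hvi⟩ := not_forall₂.1 h
  rw [Finset.sum_eq_single i (fun j hj hji => by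
    rw [hCL.apply_eq_zero_of_adj hp hv (hτ hi hj hji.symm) hvi, abs_zero]) (absurd hi)]
  exact (hp.abs_apply_le v i).trans hv.1

lemma sum_abs_le (hCL : p.IsCL) (hp : p.IsAbsolute) {τ : Finset ι}
    (hτ : p.coordinateGraph.IsClique (τ : Set ι)) (x : ι → ℝ) : ∑ j ∈ τ, |x j| ≤ p x := by
  have hconv : ConvexOn ℝ {x | p x ≤ 1} fun y => ∑ j ∈ τ, |y j| := by
    refine ⟨p.convex_unitBall, fun y _ z _ a b ha hb _ => ?_⟩
    simp only [Pi.add_apply, Pi.smul_apply, smul_eq_mul, Finset.mul_sum, ← Finset.sum_add_distrib]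
    refine Finset.sum_le_sum fun j _ => (abs_add_le _ _).trans_eq ?_
    rw [abs_mul, abs_mul, abs_of_nonneg ha, abs_of_nonneg hb]
  refine le_of_forall_gt_imp_ge_of_dense fun t ht => ?_
  have ht0 : 0 < t := (apply_nonneg p x).trans_lt ht
  have hball : p (t⁻¹ • x) ≤ 1 := by
    rw [map_smul_eq_mul, Real.norm_eq_abs, abs_inv, abs_of_pos ht0, inv_mul_le_iff₀ ht0,
      mul_one]
    exact ht.le
  have := hconv.le_of_forall_mem_extremePoints_le hp.isCompact_unitBall (by fun_prop)
    (fun v hv => hCL.sum_abs_le_one_of_mem_extremePoints hp hτ hv) hball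
  simp only [Pi.smul_apply, smul_eq_mul, abs_mul, abs_inv, abs_of_pos ht0, ← Finset.mul_sum,
    inv_mul_le_iff₀ ht0, mul_one] at this
  exact this

lemma apply_indicator_eq_sum_abs (hCL : p.IsCL) (hp : p.IsAbsolute) {τ : Finset ι}
    (hτ : p.coordinateGraph.IsClique (τ : Set ι)) (a : ι → ℝ) :
    p (fun i => if i ∈ τ then a i else 0) = ∑ j ∈ τ, |a j| := by
  have hsum : ∀ s : Finset ι, ∑ j ∈ s, |if j ∈ τ then a j else 0| = ∑ j ∈ s ∩ τ, |a j| :=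
    fun s => by simp only [apply_ite, abs_zero, Finset.sum_ite_mem]
  refine le_antisymm ((hp.le_sum_abs _).trans_eq ?_) ?_
  · rw [hsum, Finset.univ_inter]
  · simpa [hsum, Finset.inter_self] using hCL.sum_abs_le hp hτ (fun i => if i ∈ τ then a i else 0)

end IsCL
end Seminorm

theorem stmt_9_general (n : ℕ) (N : (Fin n → ℝ) → ℝ)
    (hadd : ∀ x y : Fin n → ℝ, N (x + y) ≤ N x + N y)
    (hsmul : ∀ (c : ℝ) (x : Fin n → ℝ), N (c • x) = |c| * N x)
    (habs : ∀ x : Fin n → ℝ, N x = N (fun j => |x j|))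
    (hunit : ∀ j : Fin n, N ((Pi.single j 1 : Fin n → ℝ)) = 1)
    -- the dual norm
    (Nd : (Fin n → ℝ) → ℝ)
    (hNd : ∀ f : Fin n → ℝ,
      Nd f = sSup {r : ℝ | ∃ x : Fin n → ℝ, N x ≤ 1 ∧ r = |∑ j, f j * x j|})
    -- `X` is a CL-space
    (hCL : ∀ f ∈ Set.extremePoints ℝ {g : Fin n → ℝ | Nd g ≤ 1},
      ∀ x ∈ Set.extremePoints ℝ {x : Fin n → ℝ | N x ≤ 1}, |∑ j, f j * x j| = 1)
    -- `τ` is a maximal clique of the graph `G(X)`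
    (τ : Finset (Fin n))
    (hclique : ∀ i ∈ τ, ∀ j ∈ τ, i ≠ j →
      1 < N ((Pi.single i 1 : Fin n → ℝ) + (Pi.single j 1 : Fin n → ℝ))) :
    ∀ a : Fin n → ℝ, N (fun i => if i ∈ τ then a i else 0) = ∑ j ∈ τ, |a j| := by
  let p : Seminorm ℝ (Fin n → ℝ) :=
    Seminorm.of N hadd fun c x => by rw [hsmul, Real.norm_eq_abs]
  have hp : p.IsAbsolute := ⟨fun x => (habs x).symm, hunit⟩
  have hdual : {g | Nd g ≤ 1} = p.dualUnitBall :=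
    Set.ext fun g => by rw [Set.mem_ofPred_eq, hNd]; exact hp.sSup_le_one_iff g
  have hpCL : p.IsCL := by
    rw [hdual] at hCL
    exact hCL
  exact hpCL.apply_indicator_eq_sum_abs hp fun i hi j hj hij => ⟨hij, hclique i hi j hj hij⟩

/-- in a finite dimensional real CL-space with an absolute norm,
the span of the coordinate vectors indexed by a maximal clique of the
associated graph is isometric to `ℓ₁`: the norm restricted there is the
`ℓ₁`-norm. -/
theorem stmt_9 (n : ℕ) (N : (Fin n → ℝ) → ℝ)
    (hadd : ∀ x y : Fin n → ℝ, N (x + y) ≤ N x + N y)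
    (hsmul : ∀ (c : ℝ) (x : Fin n → ℝ), N (c • x) = |c| * N x)
    (habs : ∀ x : Fin n → ℝ, N x = N (fun j => |x j|))
    (hunit : ∀ j : Fin n, N ((Pi.single j 1 : Fin n → ℝ)) = 1)
    (hdef : ∀ x : Fin n → ℝ, N x = 0 → x = 0)
    -- the dual norm
    (Nd : (Fin n → ℝ) → ℝ)
    (hNd : ∀ f : Fin n → ℝ,
      Nd f = sSup {r : ℝ | ∃ x : Fin n → ℝ, N x ≤ 1 ∧ r = |∑ j, f j * x j|})
    -- `X` is a CL-space
    (hCL : ∀ f ∈ Set.extremePoints ℝ {g : Fin n → ℝ | Nd g ≤ 1},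
      ∀ x ∈ Set.extremePoints ℝ {x : Fin n → ℝ | N x ≤ 1}, |∑ j, f j * x j| = 1)
    -- `τ` is a maximal clique of the graph `G(X)`
    (τ : Finset (Fin n))
    (hclique : ∀ i ∈ τ, ∀ j ∈ τ, i ≠ j →
      1 < N ((Pi.single i 1 : Fin n → ℝ) + (Pi.single j 1 : Fin n → ℝ)))
    (hmax : ∀ τ' : Finset (Fin n), τ ⊆ τ' →
      (∀ i ∈ τ', ∀ j ∈ τ', i ≠ j →
        1 < N ((Pi.single i 1 : Fin n → ℝ) + (Pi.single j 1 : Fin n → ℝ))) → τ' = τ) :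
    ∀ a : Fin n → ℝ, N (fun i => if i ∈ τ then a i else 0) = ∑ j ∈ τ, |a j| :=
  stmt_9_general n N hadd hsmul habs hunit Nd hNd hCL τ hclique
end

section
/- Let $Y = \ell_1^n$ over $\mathbb{C}$. Then every element of the unit sphere of $Y$ is a complex extreme point of the unit ball of $Y$. -/
/-- If the triangle inequality `2‖a‖ ≤ ‖a+b‖ + ‖a-b‖` is (anti-)saturated, then `b` is a
real multiple of `a`. -/
lemma keyB (a b : ℂ) (h : ‖a + b‖ + ‖a - b‖ ≤ 2 * ‖a‖) : ∃ t : ℝ, b = (t : ℂ) * a := by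
  have heq : ‖(a + b) + (a - b)‖ = ‖a + b‖ + ‖a - b‖ := by
    refine le_antisymm (norm_add_le _ _) ?_
    have : (a + b) + (a - b) = 2 * a := by ring
    rw [this]
    simpa [norm_mul] using h
  have hray : SameRay ℝ (a + b) (a - b) := sameRay_iff_norm_add.mpr heq
  obtain ⟨r, s, _, _, _, h1, _⟩ := hray.exists_eq_smul_add
  have h2a : (a + b) + (a - b) = 2 * a := by ring
  rw [h2a] at h1
  refine ⟨2 * r - 1, ?_⟩
  have : b = r • (2 * a) - a := by rw [← h1]; ring
  rw [this]
  push_cast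
  simp [Complex.real_smul]
  ring

/-- every point of the unit sphere of complex `ℓ₁ⁿ` is a complex
extreme point of the unit ball. -/
theorem stmt_11 (n : ℕ) (x : Fin n → ℂ) (hx : ∑ j, ‖x j‖ = 1) :
    ∀ y : Fin n → ℂ,
      (∀ θ : ℝ, ∑ j, ‖x j + Complex.exp (θ * Complex.I) * y j‖ ≤ 1) → y = 0 := by
  intro y hθ
  -- key: for every θ and j, ‖x j + e^{iθ} y j‖ + ‖x j - e^{iθ} y j‖ ≤ 2‖x j‖
  have key : ∀ θ : ℝ, ∀ j : Fin n,
      ‖x j + Complex.exp (θ * Complex.I) * y j‖ +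
        ‖x j - Complex.exp (θ * Complex.I) * y j‖ ≤ 2 * ‖x j‖ := by
    intro θ j
    set e := Complex.exp (θ * Complex.I) with he
    have hneg : ∀ k, x k + Complex.exp ((θ + Real.pi) * Complex.I) * y k
        = x k - e * y k := by
      intro k
      rw [add_mul, Complex.exp_add, Complex.exp_pi_mul_I, ← he]
      ring
    have h2 : ∑ k, ‖x k - e * y k‖ ≤ 1 := by
      have h := hθ (θ + Real.pi)
      push_cast at h
      simpa [hneg] using h
    have hsum : ∑ k, (‖x k + e * y k‖ + ‖x k - e * y k‖ - 2 * ‖x k‖) ≤ 0 := by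
      have : ∑ k, (‖x k + e * y k‖ + ‖x k - e * y k‖ - 2 * ‖x k‖)
          = (∑ k, ‖x k + e * y k‖) + (∑ k, ‖x k - e * y k‖) - 2 * ∑ k, ‖x k‖ := by
        rw [Finset.sum_sub_distrib, Finset.sum_add_distrib, Finset.mul_sum]
      rw [this, hx]
      linarith [hθ θ, h2]
    have hnonneg : ∀ k ∈ Finset.univ,
        0 ≤ ‖x k + e * y k‖ + ‖x k - e * y k‖ - 2 * ‖x k‖ := by
      intro k _
      have : (2 : ℝ) * ‖x k‖ = ‖(x k + e * y k) + (x k - e * y k)‖ := by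
        have : (x k + e * y k) + (x k - e * y k) = 2 * x k := by ring
        rw [this, norm_mul]
        simp
      linarith [norm_add_le (x k + e * y k) (x k - e * y k), this.ge, this.le]
    have := Finset.single_le_sum hnonneg (Finset.mem_univ j)
    linarith
  -- apply at θ = 0 and θ = π/2
  funext j
  have h0 : ∃ t : ℝ, y j = (t : ℂ) * x j := by
    have := key 0 j
    simp only [Complex.ofReal_zero, zero_mul, Complex.exp_zero, one_mul] at this
    exact keyB _ _ this
  have h1 : ∃ t : ℝ, Complex.I * y j = (t : ℂ) * x j := by
    have hthis := key (Real.pi / 2) j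
    have hI : Complex.exp (((Real.pi / 2 : ℝ) : ℂ) * Complex.I) = Complex.I := by
      rw [Complex.exp_mul_I, ← Complex.ofReal_cos, ← Complex.ofReal_sin,
        Real.cos_pi_div_two, Real.sin_pi_div_two]
      simp
    rw [hI] at hthis
    exact keyB _ _ hthis
  obtain ⟨t₀, ht₀⟩ := h0
  obtain ⟨t₁, ht₁⟩ := h1
  rcases eq_or_ne (x j) 0 with hx0 | hx0
  · simp [ht₀, hx0]
  · have : Complex.I * ((t₀ : ℂ) * x j) = (t₁ : ℂ) * x j := by rw [← ht₀, ht₁]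
    have hIt : Complex.I * (t₀ : ℂ) = (t₁ : ℂ) := by
      refine mul_right_cancel₀ hx0 ?_
      rw [mul_assoc]; exact this
    have ht0 : t₀ = 0 := by
      have := congrArg Complex.im hIt
      simpa using this
    simp [ht₀, ht0]
end

section
/- Let $X$ be an $n$-dimensional complex Banach space with an absolute norm such that $X$ is a CL-space, and suppose that the closed unit ball $B_X$ has exactly one extreme point all of whose coordinates are nonnegative real numbers. Then $X$ is isometrically isomorphic to $\ell_\infty^n$. -/
/-!
An absolute norm is monotone in the moduli of the coordinates; hence `‖x‖_∞ ≤ N x`, and the unit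
ball `B` is compact, convex and invariant under rotating each coordinate separately. Rotating an
extreme point `z` onto its modulus vector `|z|` gives an extreme point with nonnegative
coordinates, so `|z| = u` for the unique such point `u`. By Krein–Milman, `B` then lies in the
polydisc `{x | ∀ j, |x j| ≤ |u j|}`; since `e_j ∈ B` this forces `|u j| ≥ 1`, and monotonicity gives
`N x ≤ N (‖x‖_∞ • u) ≤ ‖x‖_∞`.
-/

open Set Function

section KreinMilman

variable {E : Type*} [AddCommGroup E] [Module ℝ E] [TopologicalSpace E] [T2Space E]
  [IsTopologicalAddGroup E] [ContinuousSMul ℝ E] [LocallyConvexSpace ℝ E]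

theorem IsCompact.subset_of_extremePoints_subset {K S : Set E} (hK : IsCompact K)
    (hKc : Convex ℝ K) (hS : IsClosed S) (hSc : Convex ℝ S) (h : K.extremePoints ℝ ⊆ S) :
    K ⊆ S := by
  rw [← closure_convexHull_extremePoints hK hKc]
  exact closure_minimal (convexHull_min h hSc) hS

end KreinMilman

namespace Seminorm

variable {ι : Type*}

-- Unlike the paper's absolute norms, this omits the normalization `p (Pi.single j 1) = 1`.
def IsAbsolute_s13 (p : Seminorm ℂ (ι → ℂ)) : Prop :=
  ∀ x, p x = p fun j => (‖x j‖ : ℂ)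

variable {p : Seminorm ℂ (ι → ℂ)} {x y : ι → ℂ}

theorem IsAbsolute_s13.congr (hp : p.IsAbsolute_s13) (h : ∀ j, ‖x j‖ = ‖y j‖) : p x = p y := by
  rw [hp x, hp y]
  simp only [h]

theorem IsAbsolute_s13.apply_update_le [DecidableEq ι] (hp : p.IsAbsolute_s13) {j : ι} {c : ℂ}
    (hc : ‖c‖ ≤ ‖y j‖) : p (update y j c) ≤ p y := by
  set t := ‖c‖ / ‖y j‖
  have ht₀ : 0 ≤ t := by positivity
  have ht₁ : t ≤ 1 := div_le_one_of_le₀ hc (norm_nonneg _)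
  have hct : ‖c‖ = ‖t • y j‖ := by
    rw [norm_smul, Real.norm_of_nonneg ht₀]
    exact (div_mul_cancel_of_imp fun h => le_antisymm (h ▸ hc) (norm_nonneg c)).symm
  have hcomb : update y j (t • y j) =
      ((1 + t) / 2) • y + ((1 - t) / 2) • update y j (-y j) := by
    ext k
    rcases eq_or_ne k j with rfl | hk
    · simp only [update_self, Pi.add_apply, Pi.smul_apply, smul_neg]
      rw [← sub_eq_add_neg, ← sub_smul]
      ring_nf
    · simp only [update_of_ne hk, Pi.add_apply, Pi.smul_apply, ← add_smul]
      ring_nf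
      simp
  have hflip : p (update y j (-y j)) = p y :=
    hp.congr fun k => by rcases eq_or_ne k j with rfl | hk <;> simp [update_of_ne, *]
  calc p (update y j c) = p (update y j (t • y j)) :=
        hp.congr fun k => by rcases eq_or_ne k j with rfl | hk <;> simp [update_of_ne, *]
    _ ≤ (1 + t) / 2 * p y + (1 - t) / 2 * p (update y j (-y j)) := by
        rw [hcomb]
        exact p.convexOn.2 trivial trivial (by linarith) (by linarith) (by ring)
    _ = p y := by rw [hflip]; ring

theorem IsAbsolute_s13.mono [Fintype ι] (hp : p.IsAbsolute_s13) (h : ∀ j, ‖x j‖ ≤ ‖y j‖) : p x ≤ p y := by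
  classical
  suffices ∀ s : Finset ι, p (s.piecewise x y) ≤ p y by simpa using this Finset.univ
  intro s
  induction s using Finset.induction_on with
  | empty => simp
  | insert j s hj ih =>
    rw [Finset.piecewise_insert]
    exact (hp.apply_update_le (by simpa [hj] using h j)).trans ih

theorem apply_single [DecidableEq ι] (hp₁ : ∀ j, p (Pi.single j 1) = 1) (j : ι) (c : ℂ) :
    p (Pi.single j c) = ‖c‖ := by
  have : (Pi.single j c : ι → ℂ) = c • Pi.single j 1 := by
    rw [← Pi.single_smul', smul_eq_mul, mul_one]
  rw [this, map_smul_eq_mul, hp₁, mul_one]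

theorem IsAbsolute_s13.norm_le [Fintype ι] [DecidableEq ι] (hp : p.IsAbsolute_s13)
    (hp₁ : ∀ j, p (Pi.single j 1) = 1) (x : ι → ℂ) : ‖x‖ ≤ p x := by
  refine (pi_norm_le_iff_of_nonneg (apply_nonneg p x)).2 fun j => ?_
  rw [← apply_single hp₁ j (x j)]
  refine hp.mono fun k => ?_
  rcases eq_or_ne k j with rfl | hk <;> simp [Pi.single_eq_of_ne, *]

theorem IsAbsolute_s13.isCompact_closedBall [Fintype ι] [DecidableEq ι] (hp : p.IsAbsolute_s13)
    (hp₁ : ∀ j, p (Pi.single j 1) = 1) (r : ℝ) : IsCompact (p.closedBall 0 r) := by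
  have hcont : Continuous p := continuousOn_univ.1 (p.convexOn.continuousOn isOpen_univ)
  refine (ProperSpace.isCompact_closedBall (0 : ι → ℂ) r).of_isClosed_subset ?_ fun x hx => ?_
  · rw [closedBall_zero_eq]
    exact isClosed_le hcont continuous_const
  · rw [mem_closedBall_zero] at hx
    simpa using (hp.norm_le hp₁ x).trans hx

theorem IsAbsolute_s13.abs_mem_extremePoints (hp : p.IsAbsolute_s13) {r : ℝ} {z : ι → ℂ}
    (hz : z ∈ (p.closedBall 0 r).extremePoints ℝ) :
    (fun j => (‖z j‖ : ℂ)) ∈ (p.closedBall 0 r).extremePoints ℝ := by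
  -- rotate each coordinate of `z` onto the nonnegative real axis
  set e : (ι → ℂ) ≃ₗ[ℝ] (ι → ℂ) := (LinearEquiv.piCongrRight fun j =>
    LinearEquiv.smulOfNeZero ℂ ℂ _ (Complex.exp_ne_zero (-(z j).arg * Complex.I))).restrictScalars ℝ
  have he : ∀ x, p (e x) = p x := fun x => hp.congr fun j => by
    simp [e, Complex.norm_exp]
  have hball : e '' p.closedBall 0 r = p.closedBall 0 r := by
    ext x
    rw [e.image_eq_preimage_symm]
    simp only [mem_preimage, mem_closedBall_zero]
    rw [← he, e.apply_symm_apply]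
  have hez : e z = fun j => (‖z j‖ : ℂ) := by
    ext j
    change Complex.exp (-(z j).arg * Complex.I) * z j = ‖z j‖
    rw [neg_mul, Complex.exp_neg, inv_mul_eq_iff_eq_mul₀ (Complex.exp_ne_zero _), mul_comm]
    exact (Complex.norm_mul_exp_arg_mul_I _).symm
  rw [← hez, ← hball, ← image_extremePoints]
  exact mem_image_of_mem e hz

theorem IsAbsolute_s13.apply_le_norm [Fintype ι] [DecidableEq ι] (hp : p.IsAbsolute_s13)
    (hp₁ : ∀ j, p (Pi.single j 1) = 1) {u : ι → ℂ} (hu : p u ≤ 1)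
    (hball : ∀ x, p x ≤ 1 → ∀ j, ‖x j‖ ≤ ‖u j‖) (x : ι → ℂ) : p x ≤ ‖x‖ := by
  have hu₁ : ∀ j, 1 ≤ ‖u j‖ := fun j => by
    simpa using hball _ (hp₁ j).le j
  calc p x ≤ p ((‖x‖ : ℂ) • u) := hp.mono fun j => by
        rw [Pi.smul_apply, norm_smul, Complex.norm_real, norm_norm]
        exact (norm_le_pi_norm x j).trans (le_mul_of_one_le_right (norm_nonneg x) (hu₁ j))
    _ ≤ ‖x‖ := by
        rw [map_smul_eq_mul, Complex.norm_real, norm_norm]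
        exact mul_le_of_le_one_right (norm_nonneg x) hu

theorem IsAbsolute_s13.apply_eq_norm_of_existsUnique [Fintype ι] [DecidableEq ι]
    (hp : p.IsAbsolute_s13) (hp₁ : ∀ j, p (Pi.single j 1) = 1)
    (huniq : ∃! u, u ∈ (p.closedBall 0 1).extremePoints ℝ ∧ ∀ j, ∃ r : ℝ, 0 ≤ r ∧ u j = r)
    (x : ι → ℂ) : p x = ‖x‖ := by
  obtain ⟨u, ⟨hu, -⟩, hu_unique⟩ := huniq
  have hmod : ∀ z ∈ (p.closedBall 0 1).extremePoints ℝ, ∀ j, ‖z j‖ = ‖u j‖ := by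
    intro z hz j
    rw [← hu_unique _ ⟨hp.abs_mem_extremePoints hz, fun j => ⟨_, norm_nonneg _, rfl⟩⟩]
    simp
  have hball : ∀ x, p x ≤ 1 → ∀ j, ‖x j‖ ≤ ‖u j‖ := by
    intro x hx j
    have hsub : p.closedBall 0 1 ⊆ (fun x => x j) ⁻¹' Metric.closedBall 0 ‖u j‖ :=
      (hp.isCompact_closedBall hp₁ 1).subset_of_extremePoints_subset (p.convex_closedBall 0 1)
        (Metric.isClosed_closedBall.preimage (continuous_apply j))
        ((_root_.convex_closedBall _ _).linear_preimage (LinearMap.proj j : (ι → ℂ) →ₗ[ℝ] ℂ))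
        fun z hz => by simpa using (hmod z hz j).le
    simpa using hsub ((mem_closedBall_zero p).2 hx)
  exact le_antisymm (hp.apply_le_norm hp₁ ((mem_closedBall_zero p).1 hu.1) hball x)
    (hp.norm_le hp₁ x)

end Seminorm

theorem stmt_13_general (n : ℕ) (N : (Fin n → ℂ) → ℝ)
    (hadd : ∀ x y : Fin n → ℂ, N (x + y) ≤ N x + N y)
    (hsmul : ∀ (c : ℂ) (x : Fin n → ℂ), N (c • x) = ‖c‖ * N x)
    (habs : ∀ x : Fin n → ℂ, N x = N (fun j => (‖x j‖ : ℂ)))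
    (hunit : ∀ j : Fin n, N ((Pi.single j 1 : Fin n → ℂ)) = 1)
    -- exactly one extreme point of the unit ball has all coordinates nonnegative reals
    (huniq : ∃! x : Fin n → ℂ, x ∈ Set.extremePoints ℝ {z : Fin n → ℂ | N z ≤ 1} ∧
      ∀ j, ∃ r : ℝ, 0 ≤ r ∧ x j = (r : ℂ)) :
    -- `X` is isometric to `ℓ∞ⁿ` (`Fin n → ℂ` with the sup norm)
    ∃ T : (Fin n → ℂ) ≃ₗ[ℂ] (Fin n → ℂ), ∀ x : Fin n → ℂ, N x = ‖T x‖ := by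
  let p : Seminorm ℂ (Fin n → ℂ) := Seminorm.of N hadd hsmul
  have hp : p.IsAbsolute_s13 := habs
  have huniq' : ∃! u, u ∈ (p.closedBall 0 1).extremePoints ℝ ∧ ∀ j, ∃ r : ℝ, 0 ≤ r ∧ u j = r := by
    rwa [Seminorm.closedBall_zero_eq]
  exact ⟨LinearEquiv.refl ℂ _, hp.apply_eq_norm_of_existsUnique hunit huniq'⟩

/-- an `n`-dimensional complex CL-space with an absolute norm
whose unit ball has exactly one extreme point with all coordinates nonnegative
reals is isometrically isomorphic to `ℓ∞ⁿ`. -/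
theorem stmt_13 (n : ℕ) (N : (Fin n → ℂ) → ℝ)
    (hadd : ∀ x y : Fin n → ℂ, N (x + y) ≤ N x + N y)
    (hsmul : ∀ (c : ℂ) (x : Fin n → ℂ), N (c • x) = ‖c‖ * N x)
    (habs : ∀ x : Fin n → ℂ, N x = N (fun j => (‖x j‖ : ℂ)))
    (hunit : ∀ j : Fin n, N ((Pi.single j 1 : Fin n → ℂ)) = 1)
    (hdef : ∀ x : Fin n → ℂ, N x = 0 → x = 0)
    -- the dual norm
    (Nd : (Fin n → ℂ) → ℝ)
    (hNd : ∀ f : Fin n → ℂ,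
      Nd f = sSup {r : ℝ | ∃ x : Fin n → ℂ, N x ≤ 1 ∧ r = ‖∑ j, f j * x j‖})
    -- `X` is a CL-space
    (hCL : ∀ f ∈ Set.extremePoints ℝ {g : Fin n → ℂ | Nd g ≤ 1},
      ∀ x ∈ Set.extremePoints ℝ {x : Fin n → ℂ | N x ≤ 1}, ‖∑ j, f j * x j‖ = 1)
    -- exactly one extreme point of the unit ball has all coordinates nonnegative reals
    (huniq : ∃! x : Fin n → ℂ, x ∈ Set.extremePoints ℝ {z : Fin n → ℂ | N z ≤ 1} ∧
      ∀ j, ∃ r : ℝ, 0 ≤ r ∧ x j = (r : ℂ)) :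
    -- `X` is isometric to `ℓ∞ⁿ` (`Fin n → ℂ` with the sup norm)
    ∃ T : (Fin n → ℂ) ≃ₗ[ℂ] (Fin n → ℂ), ∀ x : Fin n → ℂ, N x = ‖T x‖ :=
  stmt_13_general n N hadd hsmul habs hunit huniq
end

section
/- Let $K$ be a complete metric space, $X$ a Banach space, $A$ a closed subspace of $C_b(K:X)$, and let $d$ be the metric on $K$. Suppose $g \in A$ has the property that for every $n \ge 1$ there exists $z_n \in K$ such that $\|g(z_n)\| > \sup\{\|g(x)\| : d(x, z_n) > 1/n\}$. Then the sequence $\{z_n\}$ converges to some $z \in K$, and $g$ is a strong peak function at $z$. -/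
open Filter

/-- if `g ∈ A ⊆ C_b(K : X)` and for every `n ≥ 1` there is
`z n ∈ K` with `‖g (z n)‖ > sup {‖g x‖ : d(x, z n) > 1/n}`, then `{z n}`
converges to some `z` and `g` is a strong peak function at `z`. -/
theorem stmt_15 {K X : Type*} [MetricSpace K] [CompleteSpace K]
    [NormedAddCommGroup X] [NormedSpace ℝ X] [CompleteSpace X]
    (A : Submodule ℝ (BoundedContinuousFunction K X))
    (hA : IsClosed (A : Set (BoundedContinuousFunction K X)))
    (g : BoundedContinuousFunction K X) (hg : g ∈ A)
    (z : ℕ → K)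
    (hz : ∀ n : ℕ, 1 ≤ n →
      sSup {r : ℝ | ∃ x : K, dist x (z n) > 1 / (n : ℝ) ∧ r = ‖g x‖} < ‖g (z n)‖) :
    ∃ w : K, Tendsto z atTop (nhds w) ∧ g ≠ 0 ∧
      ∀ u : ℕ → K, Tendsto (fun k => ‖g (u k)‖) atTop (nhds ‖g‖) →
        Tendsto u atTop (nhds w) := by
  have hbdd : ∀ n : ℕ,
      BddAbove {r : ℝ | ∃ x : K, dist x (z n) > 1 / (n : ℝ) ∧ r = ‖g x‖} := by
    intro n
    refine ⟨‖g‖, ?_⟩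
    rintro r ⟨x, -, rfl⟩
    exact g.norm_coe_le_norm x
  have key : ∀ n : ℕ, 1 ≤ n → ∀ x : K, dist x (z n) > 1 / (n : ℝ) →
      ‖g x‖ < ‖g (z n)‖ := by
    intro n hn x hx
    exact lt_of_le_of_lt (le_csSup (hbdd n) ⟨x, hx, rfl⟩) (hz n hn)
  have hd : ∀ m n : ℕ, 1 ≤ n → n ≤ m → dist (z m) (z n) ≤ 1 / (n : ℝ) := by
    intro m n hn hnm
    by_contra h
    push_neg at h
    have h1 : ‖g (z m)‖ < ‖g (z n)‖ := key n hn _ h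
    have hmn : (1 : ℝ) / m ≤ 1 / n :=
      one_div_le_one_div_of_le (by exact_mod_cast hn) (by exact_mod_cast hnm)
    have h2 : ‖g (z n)‖ < ‖g (z m)‖ := by
      refine key m (hn.trans hnm) _ ?_
      rw [dist_comm]
      exact lt_of_le_of_lt hmn h
    exact absurd h1 (not_lt.mpr h2.le)
  have hc : CauchySeq z := by
    rw [Metric.cauchySeq_iff']
    intro ε hε
    obtain ⟨N, hN⟩ := exists_nat_one_div_lt hε
    refine ⟨N + 1, fun n hn => lt_of_le_of_lt (hd n (N + 1) (by omega) hn) ?_⟩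
    exact_mod_cast hN
  obtain ⟨w, hw⟩ := cauchySeq_tendsto_of_complete hc
  have hg0 : 0 < ‖g (z 1)‖ :=
    lt_of_le_of_lt (Real.sSup_nonneg (by rintro r ⟨x, -, rfl⟩; positivity)) (hz 1 le_rfl)
  refine ⟨w, hw, ?_, ?_⟩
  · intro h0
    rw [h0] at hg0
    simp at hg0
  · intro u hu
    rw [Metric.tendsto_atTop] at hw ⊢
    intro ε hε
    obtain ⟨N0, hN0⟩ := exists_nat_one_div_lt (half_pos hε)
    obtain ⟨N1, hN1⟩ := hw (ε / 2) (half_pos hε)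
    set n := max (N0 + 1) N1 with hn_def
    have hn1 : 1 ≤ n := le_trans (by omega) (le_max_left _ _)
    have hninv : 1 / (n : ℝ) < ε / 2 := by
      refine lt_of_le_of_lt ?_ hN0
      push_cast
      refine one_div_le_one_div_of_le (by positivity) ?_
      exact_mod_cast le_max_left (N0 + 1) N1
    have hzn : dist (z n) w < ε / 2 := hN1 n (le_max_right _ _)
    have hcsup : sSup {r : ℝ | ∃ x : K, dist x (z n) > 1 / (n : ℝ) ∧ r = ‖g x‖} < ‖g‖ :=
      lt_of_lt_of_le (hz n hn1) (g.norm_coe_le_norm _)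
    have hev : ∀ᶠ k in atTop,
        sSup {r : ℝ | ∃ x : K, dist x (z n) > 1 / (n : ℝ) ∧ r = ‖g x‖} < ‖g (u k)‖ :=
      hu.eventually (eventually_gt_nhds hcsup)
    obtain ⟨K0, hK0⟩ := eventually_atTop.mp hev
    refine ⟨K0, fun k hk => ?_⟩
    have hdk : dist (u k) (z n) ≤ 1 / (n : ℝ) := by
      by_contra hcon
      push_neg at hcon
      exact absurd (hK0 k hk) (not_lt.mpr (le_csSup (hbdd n) ⟨u k, hcon, rfl⟩))
    calc dist (u k) w ≤ dist (u k) (z n) + dist (z n) w := dist_triangle _ _ _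
      _ < ε / 2 + ε / 2 := add_lt_add_of_le_of_lt (hdk.trans hninv.le) hzn
      _ = ε := add_halves ε
end

section
/- Let $G$ be a graph on vertex set $V = \{1,\dots,n\}$ with the property that every maximal clique and every maximal stable set of $G$ intersect in exactly one vertex. If $S_1, S_2$ are maximal stable sets and $i \in S_1 \setminus S_2$, then there exists a maximal clique $\tau$ of $G$ with $\tau \cap S_1 = \{i\}$ and $\tau \cap S_2 = \{j\}$ for some $j \ne i$. -/
/-- A maximal clique of a simple graph. -/
def IsMaxClique {V : Type*} (G : SimpleGraph V) (τ : Set V) : Prop :=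
  G.IsClique τ ∧ ∀ τ' : Set V, G.IsClique τ' → τ ⊆ τ' → τ' = τ

/-- A maximal stable (independent) set of a simple graph. -/
def IsMaxStable {V : Type*} (G : SimpleGraph V) (S : Set V) : Prop :=
  (∀ i ∈ S, ∀ j ∈ S, ¬ G.Adj i j) ∧
  ∀ S' : Set V, (∀ i ∈ S', ∀ j ∈ S', ¬ G.Adj i j) → S ⊆ S' → S' = S

lemma exists_maxClique_superset {V : Type*} (G : SimpleGraph V) (s : Set V)
    (hs : G.IsClique s) : ∃ τ : Set V, IsMaxClique G τ ∧ s ⊆ τ := by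
  obtain ⟨m, hm, hmax⟩ := zorn_subset_nonempty {t : Set V | G.IsClique t ∧ s ⊆ t}
    (fun c hcS hchain hne => by
      refine ⟨⋃₀ c, ⟨?_, ?_⟩, fun t ht => Set.subset_sUnion_of_mem ht⟩
      · intro a ha b hb hab
        obtain ⟨ta, hta, hata⟩ := ha
        obtain ⟨tb, htb, hbtb⟩ := hb
        rcases hchain.total hta htb with h | h
        · exact (hcS htb).1 (h hata) hbtb hab
        · exact (hcS hta).1 hata (h hbtb) hab
      · obtain ⟨t, ht⟩ := hne
        exact (hcS ht).2.trans (Set.subset_sUnion_of_mem ht))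
    s ⟨hs, subset_rfl⟩
  refine ⟨m, ⟨hmax.prop.1, fun τ' hτ' hsub => ?_⟩, hmax.prop.2⟩
  exact (hmax.eq_of_subset ⟨hτ', hmax.prop.2.trans hsub⟩ hsub).symm

/-- if in a graph `G` on `{1,…,n}` every maximal clique meets every
maximal stable set in exactly one vertex, then for maximal stable sets `S₁, S₂`
and `i ∈ S₁ \ S₂` there is a maximal clique `τ` with `τ ∩ S₁ = {i}` and
`τ ∩ S₂ = {j}` for some `j ≠ i`. -/
theorem stmt_19 (n : ℕ) (G : SimpleGraph (Fin n))
    (hmeet : ∀ τ S : Set (Fin n), IsMaxClique G τ → IsMaxStable G S →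
      ∃! v : Fin n, v ∈ τ ∩ S)
    (S₁ S₂ : Set (Fin n)) (hS₁ : IsMaxStable G S₁) (hS₂ : IsMaxStable G S₂)
    (i : Fin n) (hi : i ∈ S₁) (hi2 : i ∉ S₂) :
    ∃ τ : Set (Fin n), IsMaxClique G τ ∧ τ ∩ S₁ = {i} ∧
      ∃ j : Fin n, j ≠ i ∧ τ ∩ S₂ = {j} := by
  obtain ⟨τ, hτ, hiτ⟩ := exists_maxClique_superset G {i}
    (by simp [SimpleGraph.isClique_singleton])
  have hiτ' : i ∈ τ := hiτ rfl
  obtain ⟨v, hv, hvu⟩ := hmeet τ S₁ hτ hS₁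
  obtain ⟨j, hj, hju⟩ := hmeet τ S₂ hτ hS₂
  refine ⟨τ, hτ, ?_, j, ?_, ?_⟩
  · have hvi : v = i := (hvu i ⟨hiτ', hi⟩).symm
    ext x
    simp only [Set.mem_singleton_iff]
    constructor
    · intro hx; exact (hvu x hx).trans hvi
    · rintro rfl; exact ⟨hiτ', hi⟩
  · rintro rfl; exact hi2 hj.2
  · ext x
    simp only [Set.mem_singleton_iff]
    exact ⟨fun hx => hju x hx, fun h => h ▸ hj⟩
end
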